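/- arXiv:2501.11753 — 4 statements merged into one kernel-verified Lean document; each statement's English description precedes it below -/
import Mathlib

section
/- Let m be a meeting function with f the inverse of t ↦ 1/m'(t), let k > 0, and let P be a Borel probability measure on the space of Borel probability measures on [0,1] such that P({ν : E_ν[θ] = 0}) = 0. Then there exists a unique η ∈ (0, β) satisfying k ∫ f(E_ν[θ]/η) · 1[β·E_ν[θ] > η] dP(ν) = 1. -/
open MeasureTheory Set Filter Topology ProbabilityTheory

noncomputable section

/-- The type space `Θ = [0,1]` of seller types. -/
abbrev Θ : Type := Set.Icc (0:ℝ) 1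

/-- The space of Borel probability measures on `[0,1]`, with the weak topology. -/
abbrev PM : Type := MeasureTheory.ProbabilityMeasure Θ

/-- Borel σ-algebra on the space of probability measures on `[0,1]`. -/
instance : MeasurableSpace PM := borel PM

/-- Expected seller type of a submarket `ν`: `E_ν[θ]`. -/
def Eθ (ν : PM) : ℝ := ∫ θ, (θ : ℝ) ∂(ν : Measure Θ)

instance : BorelSpace PM := ⟨rfl⟩

lemma Eθ_cont : Continuous Eθ := by
  have := MeasureTheory.ProbabilityMeasure.continuous_integral_boundedContinuousFunction
    (X := Θ) (BoundedContinuousFunction.mkOfCompact ⟨fun θ : Θ => (θ:ℝ), continuous_subtype_val⟩)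
  simp [Eθ, BoundedContinuousFunction.mkOfCompact] at this
  exact this

lemma Eθ_int (ν : PM) : Integrable (fun θ : Θ => (θ:ℝ)) (ν : Measure Θ) := by
  have := (BoundedContinuousFunction.mkOfCompact
    ⟨fun θ : Θ => (θ:ℝ), continuous_subtype_val⟩).integrable (μ := (ν : Measure Θ))
  simpa [BoundedContinuousFunction.mkOfCompact] using this

lemma Eθ_nonneg (ν : PM) : 0 ≤ Eθ ν :=
  integral_nonneg fun θ => θ.2.1

lemma Eθ_le_one (ν : PM) : Eθ ν ≤ 1 := by
  have h := integral_mono (μ := (ν : Measure Θ)) (Eθ_int ν) (integrable_const 1)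
    (fun θ => θ.2.2)
  simpa [Eθ] using h

/-- A meeting function: `m 0 = 0`, `m t ≤ min 1 t`, twice differentiable, strictly increasing
and strictly concave, with `β = lim_{t→0+} m t / t ∈ (0,1]` and `α = lim_{t→∞} m t ∈ (0,1]`. -/
structure MeetingFunction where
  m : ℝ → ℝ
  β : ℝ
  α : ℝ
  m_zero : m 0 = 0
  m_le : ∀ t ≥ (0:ℝ), m t ≤ min 1 t
  diff1 : ∀ t > (0:ℝ), DifferentiableAt ℝ m t
  diff2 : ∀ t > (0:ℝ), DifferentiableAt ℝ (deriv m) t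
  mono : StrictMonoOn m (Ici 0)
  concave : StrictConcaveOn ℝ (Ici 0) m
  β_mem : β ∈ Ioc (0:ℝ) 1
  α_mem : α ∈ Ioc (0:ℝ) 1
  β_lim : Tendsto (fun t => m t / t) (nhdsWithin 0 (Ioi 0)) (nhds β)
  α_lim : Tendsto m atTop (nhds α)

theorem stmt1_aux (M : ℝ) (hβ : M ∈ Ioc (0:ℝ) 1) (f : ℝ → ℝ)
    (hf0 : f (1 / M) = 0)
    (hfmono : StrictMonoOn f (Ici (1 / M)))
    (hfcont : ContinuousOn f (Ici (1 / M)))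
    (hftop : Tendsto f atTop atTop)
    (k : ℝ) (hk : 0 < k)
    (P : Measure PM) [IsProbabilityMeasure P]
    (hP0 : P {ν | Eθ ν = 0} = 0) :
    ∃! η : ℝ, η ∈ Ioo 0 M ∧
      k * ∫ ν, (if M * Eθ ν > η then f (Eθ ν / η) else 0) ∂P = 1 := by
  have hβ0 : (0:ℝ) < M := hβ.1
  set c : ℝ := 1 / M with hc_def
  have hc : 0 < c := by positivity
  set F : ℝ → ℝ := fun y => f (max y c) with hF_def
  have hFcont : Continuous F :=
    hfcont.comp_continuous (continuous_id.max continuous_const)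
      (fun y => mem_Ici.2 (le_max_right _ _))
  have hFmono : Monotone F := fun y₁ y₂ h =>
    hfmono.monotoneOn (mem_Ici.2 (le_max_right _ _)) (mem_Ici.2 (le_max_right _ _))
      (max_le_max h le_rfl)
  have hFc : F c = 0 := by simp [hF_def, hf0]
  have hFzero : ∀ y ≤ c, F y = 0 := by
    intro y hy; simp only [hF_def]; rw [max_eq_right hy]; exact hf0
  have hF0 : ∀ y, 0 ≤ F y := by
    intro y
    rcases le_or_gt y c with h | h
    · exact (hFzero y h).ge
    · calc (0:ℝ) = F c := hFc.symm
        _ ≤ F y := hFmono h.le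
  have hFeq : ∀ y ≥ c, F y = f y := by
    intro y hy; simp only [hF_def]; rw [max_eq_left hy]
  have hFpos : ∀ y, 0 < F y → c < y := by
    intro y hy
    by_contra h
    rw [hFzero y (not_lt.1 h)] at hy; exact lt_irrefl 0 hy
  -- rewrite of the integrand
  have hrw : ∀ η > (0:ℝ), ∀ ν : PM,
      (if M * Eθ ν > η then f (Eθ ν / η) else 0) = F (Eθ ν / η) := by
    intro η hη ν
    by_cases h : M * Eθ ν > η
    · rw [if_pos h, hFeq]
      have : c < Eθ ν / η := by
        rw [hc_def, div_lt_div_iff₀ hβ0 hη]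
        linarith [h]
      exact this.le
    · rw [if_neg h, hFzero]
      push_neg at h
      rw [hc_def, div_le_div_iff₀ hη hβ0]
      linarith [h]
  set h : ℝ → PM → ℝ := fun η ν => F (Eθ ν / η) with hh_def
  set G : ℝ → ℝ := fun η => ∫ ν, h η ν ∂P with hG_def
  have hmeas : ∀ η, AEStronglyMeasurable (h η) P :=
    fun η => (hFcont.comp (Eθ_cont.div_const η)).aestronglyMeasurable
  have hbound : ∀ η > (0:ℝ), ∀ ν, h η ν ≤ F (1/η) := by
    intro η hη ν
    exact hFmono (by gcongr; exact Eθ_le_one ν)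
  have hint : ∀ η > (0:ℝ), Integrable (h η) P := by
    intro η hη
    refine ⟨hmeas η, HasFiniteIntegral.of_bounded (C := F (1/η)) (ae_of_all _ fun ν => ?_)⟩
    rw [Real.norm_eq_abs, abs_of_nonneg (hF0 _)]
    exact hbound η hη ν
  have hGub : ∀ η > (0:ℝ), G η ≤ F (1/η) := by
    intro η hη
    have := integral_mono (hint η hη) (integrable_const (F (1/η))) (hbound η hη)
    simpa using this
  -- positive-measure set bounded away from 0
  obtain ⟨n, hn⟩ : ∃ n : ℕ, P {ν | 1/(n+1) ≤ Eθ ν} ≠ 0 := by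
    by_contra hcon
    push_neg at hcon
    have hsub : {ν : PM | 0 < Eθ ν} ⊆ ⋃ n : ℕ, {ν | 1/((n:ℝ)+1) ≤ Eθ ν} := by
      intro ν hν
      obtain ⟨n, hn⟩ := exists_nat_one_div_lt (show (0:ℝ) < Eθ ν from hν)
      exact mem_iUnion.2 ⟨n, hn.le⟩
    have h1 : P {ν : PM | 0 < Eθ ν} = 0 :=
      measure_mono_null hsub (measure_iUnion_null hcon)
    have huniv : (univ : Set PM) ⊆ {ν | Eθ ν = 0} ∪ {ν | 0 < Eθ ν} := by
      intro ν _
      rcases eq_or_lt_of_le (Eθ_nonneg ν) with h | h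
      · exact Or.inl h.symm
      · exact Or.inr h
    have := measure_mono (μ := P) huniv
    rw [measure_univ] at this
    have := this.trans (measure_union_le _ _)
    rw [hP0, h1] at this
    simp at this
  set ε : ℝ := 1/((n:ℝ)+1) with hε_def
  have hε : 0 < ε := by positivity
  set A : Set PM := {ν | ε ≤ Eθ ν} with hA_def
  have hAmeas : MeasurableSet A := (isClosed_le continuous_const Eθ_cont).measurableSet
  set pA : ℝ := (P A).toReal with hpA_def
  have hpA : 0 < pA := by
    rw [hpA_def]
    exact ENNReal.toReal_pos hn (measure_ne_top P A)
  have hGlb : ∀ η > (0:ℝ), pA * F (ε/η) ≤ G η := by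
    intro η hη
    have hind : ∀ ν, A.indicator (fun _ => F (ε/η)) ν ≤ h η ν := by
      intro ν
      by_cases hν : ν ∈ A
      · rw [indicator_of_mem hν]
        exact hFmono (by gcongr; exact hν)
      · rw [indicator_of_notMem hν]; exact hF0 _
    have := integral_mono ((integrable_const (F (ε/η))).indicator hAmeas) (hint η hη) hind
    rwa [integral_indicator_const _ hAmeas, smul_eq_mul] at this
  -- choose η₀ with k * G η₀ ≥ 1
  obtain ⟨y₀, hy₀⟩ := (tendsto_atTop.mp hftop (1/(k*pA))).exists_forall_of_atTop
  set y : ℝ := max y₀ (max (c+1) (ε/M + 1)) with hy_def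
  have hyc : c < y := lt_of_lt_of_le (lt_add_one c) (le_trans (le_max_left _ _) (le_max_right _ _))
  have hyy₀ : y₀ ≤ y := le_max_left _ _
  have hyε : ε/M < y := lt_of_lt_of_le (lt_add_one _) (le_trans (le_max_right _ _) (le_max_right _ _))
  have hy0 : 0 < y := hc.trans hyc
  set η₀ : ℝ := ε / y with hη₀_def
  have hη₀pos : 0 < η₀ := by positivity
  have hη₀β : η₀ < M := by
    rw [hη₀_def, div_lt_iff₀ hy0]
    calc ε = M * (ε / M) := by field_simp
      _ < M * y := by gcongr
  have hεη₀ : ε / η₀ = y := by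
    rw [hη₀_def]; field_simp
  have hGη₀ : 1/k ≤ G η₀ := by
    calc 1/k = pA * (1/(k*pA)) := by field_simp
      _ ≤ pA * F (ε/η₀) := by
          rw [hεη₀, hFeq y hyc.le]
          exact mul_le_mul_of_nonneg_left (hy₀ y hyy₀) hpA.le
      _ ≤ G η₀ := hGlb η₀ hη₀pos
  -- choose η₁ ∈ (η₀, M) with k * F (1/η₁) < 1
  have hφcont : ContinuousAt (fun η => k * F (1/η)) M := by
    apply ContinuousAt.mul continuousAt_const
    exact hFcont.continuousAt.comp ((continuousAt_const.div continuousAt_id hβ0.ne')) 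
  have hφβ : k * F (1/M) = 0 := by rw [← hc_def, hFc, mul_zero]
  have hev : ∀ᶠ η in 𝓝[<] M, k * F (1/η) < 1 := by
    apply eventually_nhdsWithin_of_eventually_nhds
    have hlt : (fun η => k * F (1/η)) M < 1 := by
      show k * F (1/M) < 1
      rw [hφβ]; norm_num
    exact hφcont.eventually_lt_const hlt
  have hIoo : Ioo η₀ M ∈ 𝓝[<] M := Ioo_mem_nhdsLT_of_mem ⟨hη₀β, le_refl M⟩
  obtain ⟨η₁, hφη₁, hη₁mem⟩ := (hev.and (eventually_of_mem hIoo (fun x hx => hx))).exists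
  have hη₁pos : 0 < η₁ := hη₀pos.trans hη₁mem.1
  have hGη₁ : k * G η₁ ≤ k * F (1/η₁) :=
    mul_le_mul_of_nonneg_left (hGub η₁ hη₁pos) hk.le
  -- continuity of G on [η₀, η₁]
  have hGcont : ContinuousOn G (Icc η₀ η₁) := by
    apply continuousOn_of_dominated (bound := fun _ => F (1/η₀))
    · intro η _; exact hmeas η
    · intro η hη
      refine ae_of_all _ fun ν => ?_
      rw [Real.norm_eq_abs, abs_of_nonneg (hF0 _)]
      refine le_trans (hbound η (hη₀pos.trans_le hη.1) ν) (hFmono ?_)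
      exact one_div_le_one_div_of_le hη₀pos hη.1
    · exact integrable_const _
    · refine ae_of_all _ fun ν => ?_
      apply hFcont.comp_continuousOn
      apply ContinuousOn.div continuousOn_const continuousOn_id
      intro η hη
      exact (hη₀pos.trans_le hη.1).ne'
  have hGkcont : ContinuousOn (fun η => k * G η) (Icc η₀ η₁) :=
    continuousOn_const.mul hGcont
  have h1mem : (1:ℝ) ∈ Icc (k * G η₁) (k * G η₀) := by
    constructor
    · exact le_of_lt (lt_of_le_of_lt hGη₁ hφη₁)
    · calc (1:ℝ) = k * (1/k) := by field_simp
        _ ≤ k * G η₀ := mul_le_mul_of_nonneg_left hGη₀ hk.le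
  obtain ⟨η, hηmem, hGη⟩ := intermediate_value_Icc' hη₁mem.1.le hGkcont h1mem
  have hηpos : 0 < η := hη₀pos.trans_le hηmem.1
  have hηβ : η < M := lt_of_le_of_lt hηmem.2 hη₁mem.2
  -- the key: any solution gives k * G = 1, and solutions are unique
  have hGsol : ∀ a, 0 < a → (k * ∫ ν, (if M * Eθ ν > a then f (Eθ ν / a) else 0) ∂P) = k * G a := by
    intro a ha
    congr 1
    exact integral_congr_ae (ae_of_all _ (fun ν => hrw a ha ν))
  have huniq : ∀ a b, 0 < a → a < b → k * G a = 1 → k * G b = 1 → False := by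
    intro a b ha hab hGa hGb
    have hb : 0 < b := ha.trans hab
    have hGbval : G b = 1/k := eq_one_div_of_mul_eq_one_left (by linarith [mul_comm (G b) k])
    have hGaval : G a = 1/k := eq_one_div_of_mul_eq_one_left (by linarith [mul_comm (G a) k])
    have hsupp : 0 < P (Function.support (h b)) := by
      have hpos : 0 < G b := by rw [hGbval]; positivity
      exact (integral_pos_iff_support_of_nonneg (fun ν => hF0 _) (hint b hb)).mp hpos
    have hdiffnn : ∀ ν, 0 ≤ h a ν - h b ν := by
      intro ν
      have : h b ν ≤ h a ν := hFmono (div_le_div_of_nonneg_left (Eθ_nonneg ν) ha hab.le)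
      linarith
    have hsub : Function.support (h b) ⊆ Function.support (fun ν => h a ν - h b ν) := by
      intro ν hν
      have hbpos : 0 < h b ν := (hF0 _).lt_of_ne (Ne.symm hν)
      have hcb : c < Eθ ν / b := hFpos _ hbpos
      have hEpos : 0 < Eθ ν := by
        have h1 : 0 < Eθ ν / b := hc.trans hcb
        calc (0:ℝ) < (Eθ ν / b) * b := by positivity
          _ = Eθ ν := div_mul_cancel₀ _ hb.ne'
      have hlt : Eθ ν / b < Eθ ν / a := div_lt_div_of_pos_left hEpos ha hab
      have : h b ν < h a ν := by
        show F (Eθ ν / b) < F (Eθ ν / a)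
        rw [hFeq _ hcb.le, hFeq _ (hcb.trans hlt).le]
        exact hfmono (mem_Ici.2 hcb.le) (mem_Ici.2 (hcb.trans hlt).le) hlt
      simp only [Function.mem_support]
      intro hcon
      rw [sub_eq_zero] at hcon
      exact absurd hcon (ne_of_gt this)
    have hdiffint : Integrable (fun ν => h a ν - h b ν) P := (hint a ha).sub (hint b hb)
    have hpos : 0 < ∫ ν, (h a ν - h b ν) ∂P := by
      rw [integral_pos_iff_support_of_nonneg hdiffnn hdiffint]
      exact lt_of_lt_of_le hsupp (measure_mono hsub)
    rw [integral_sub (hint a ha) (hint b hb)] at hpos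
    have : G a - G b = 0 := by rw [hGaval, hGbval]; ring
    show False
    have : (∫ ν, h a ν ∂P) - (∫ ν, h b ν ∂P) = 0 := this
    linarith
  refine ⟨η, ⟨⟨hηpos, hηβ⟩, ?_⟩, ?_⟩
  · rw [hGsol η hηpos]; exact hGη
  · rintro y' ⟨hy'mem, hy'eq⟩
    rw [hGsol y' hy'mem.1] at hy'eq
    have hηeq : k * G η = 1 := by rw [← hGsol η hηpos]; rw [hGsol η hηpos]; exact hGη
    rcases lt_trichotomy y' η with h | h | h
    · exact absurd (huniq y' η hy'mem.1 h hy'eq hηeq) not_false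
    · exact h
    · exact absurd (huniq η y' hηpos h hηeq hy'eq) not_false

/-- Existence and uniqueness of the multiplier `η ∈ (0,β)` making the
first-best feasibility constraint bind. -/
theorem stmt1 (M : MeetingFunction) (f : ℝ → ℝ)
    (hf0 : f (1 / M.β) = 0)
    (hfmono : StrictMonoOn f (Ici (1 / M.β)))
    (hfcont : ContinuousOn f (Ici (1 / M.β)))
    (hftop : Tendsto f atTop atTop)
    (hfinv : ∀ t > (0:ℝ), f (1 / deriv M.m t) = t)
    (k : ℝ) (hk : 0 < k)
    (P : Measure PM) [IsProbabilityMeasure P]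
    (hP0 : P {ν | Eθ ν = 0} = 0) :
    ∃! η : ℝ, η ∈ Ioo 0 M.β ∧
      k * ∫ ν, (if M.β * Eθ ν > η then f (Eθ ν / η) else 0) ∂P = 1 :=
  stmt1_aux M.β M.β_mem f hf0 hfmono hfcont hftop k hk P hP0
end
end

section
/- Suppose ∫ w(ν) dP(ν) > 0 and let w̄ := P-essential supremum of w. Then there exists a search equilibrium (τ*, u*) with 0 < u* < β·w̄ and τ*(ν) = g(w(ν)/u*) · 1[β·w(ν) > u*] for P-almost every ν. Moreover, the equilibrium is essentially unique: any search equilibrium (τ, u) satisfies u = u* and τ = τ* P-almost everywhere. -/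
open MeasureTheory Set Filter Topology ProbabilityTheory

noncomputable section

/-- A buyer's meeting probability `m(t)/t`, interpreted as `β` at `t = 0`. -/
def ratio (M : MeetingFunction) (t : ℝ) : ℝ := if t = 0 then M.β else M.m t / t

/-- Buyers' expected payoff conditional on trade in submarket `ν`: `w(ν) = ∫ λ(θ)θ dν(θ)`. -/
def wOf (lam : Θ → ℝ) (ν : PM) : ℝ := ∫ θ, lam θ * (θ : ℝ) ∂(ν : Measure Θ)

/-- A search equilibrium `(τ, u)`: a nonnegative `P`-integrable tightness function with
`k ∫ τ dP = 1` such that, `P`-a.e., `(m(τ(ν))/τ(ν)) w(ν) ≤ u`, with equality when `τ(ν) > 0`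
(where `m(τ(ν))/τ(ν)` is interpreted as `β` when `τ(ν) = 0`). -/
def IsSearchEq (M : MeetingFunction) (k : ℝ) (P : Measure PM) (w : PM → ℝ)
    (τ : PM → ℝ) (u : ℝ) : Prop :=
  (∀ ν, 0 ≤ τ ν) ∧ Integrable τ P ∧ k * ∫ ν, τ ν ∂P = 1 ∧
    ∀ᵐ ν ∂P, ratio M (τ ν) * w ν ≤ u ∧ (0 < τ ν → ratio M (τ ν) * w ν = u)

lemma st6_measurable_pm_apply : ∀ ⦃s : Set Θ⦄, MeasurableSet s →
    Measurable fun ν : PM => (ν : Measure Θ) s := by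
  apply MeasurableSet.induction_on_open
  · intro U hU
    apply LowerSemicontinuous.measurable
    intro ν
    refine lowerSemicontinuousAt_iff_le_liminf.2 ?_
    exact ProbabilityMeasure.le_liminf_measure_open_of_tendsto tendsto_id hU
  · intro t ht hmt
    have : ∀ ν : PM, (ν : Measure Θ) tᶜ = 1 - (ν : Measure Θ) t := by
      intro ν
      rw [measure_compl ht (measure_ne_top _ _), measure_univ]
    simp only [this]
    exact Measurable.const_sub hmt 1
  · intro f hdisj hmeas hC
    have : ∀ ν : PM, (ν : Measure Θ) (⋃ i, f i) = ∑' i, (ν : Measure Θ) (f i) := fun ν =>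
      measure_iUnion hdisj hmeas
    simp only [this]
    exact Measurable.ennreal_tsum hC

lemma st6_measurable_pm_coe : Measurable ((↑) : PM → Measure Θ) :=
  Measure.measurable_of_measurable_coe _ fun _ hs => st6_measurable_pm_apply hs

lemma st6_measurable_pm_lintegral {h : Θ → ENNReal} (hh : Measurable h) :
    Measurable fun ν : PM => ∫⁻ θ, h θ ∂(ν : Measure Θ) :=
  (Measure.measurable_lintegral hh).comp st6_measurable_pm_coe

section w
variable {lam : Θ → ℝ}

lemma st6_f_meas (hlam_meas : Measurable lam) : Measurable (fun θ : Θ => lam θ * (θ:ℝ)) :=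
  hlam_meas.mul measurable_subtype_coe

lemma st6_f_mem (hlam : ∀ θ, lam θ ∈ Icc (0:ℝ) 1) (θ : Θ) : lam θ * (θ:ℝ) ∈ Icc (0:ℝ) 1 := by
  have h1 := hlam θ
  have h2 := θ.2
  constructor
  · exact mul_nonneg h1.1 h2.1
  · calc lam θ * (θ:ℝ) ≤ 1 * 1 := mul_le_mul h1.2 h2.2 h2.1 zero_le_one
    _ = 1 := by ring

lemma st6_measurable_wOf (hlam_meas : Measurable lam) (hlam : ∀ θ, lam θ ∈ Icc (0:ℝ) 1) :
    Measurable (wOf lam) := by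
  have : wOf lam = fun ν : PM =>
      (∫⁻ θ, ENNReal.ofReal (lam θ * (θ:ℝ)) ∂(ν : Measure Θ)).toReal := by
    funext ν
    exact integral_eq_lintegral_of_nonneg_ae (ae_of_all _ fun θ => (st6_f_mem hlam θ).1)
      (st6_f_meas hlam_meas).aestronglyMeasurable
  rw [this]
  exact (st6_measurable_pm_lintegral
    (ENNReal.measurable_ofReal.comp (st6_f_meas hlam_meas))).ennreal_toReal

lemma st6_wOf_mem (hlam : ∀ θ, lam θ ∈ Icc (0:ℝ) 1) (ν : PM) : wOf lam ν ∈ Icc (0:ℝ) 1 := by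
  constructor
  · exact integral_nonneg fun θ => (st6_f_mem hlam θ).1
  · calc wOf lam ν ≤ ∫ _, (1:ℝ) ∂(ν : Measure Θ) :=
          integral_mono_of_nonneg (ae_of_all _ fun θ => (st6_f_mem hlam θ).1)
            (integrable_const 1) (ae_of_all _ fun θ => (st6_f_mem hlam θ).2)
    _ = 1 := by simp
end w

/-! ### Auxiliary facts about meeting functions -/

variable (M : MeetingFunction)

lemma st6_m_pos {t : ℝ} (ht : 0 < t) : 0 < M.m t := by
  have := M.mono (le_refl (0:ℝ)) (le_of_lt ht) ht
  rwa [M.m_zero] at this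

lemma st6_rr_anti {s t : ℝ} (hs : 0 < s) (hst : s < t) : M.m t / t < M.m s / s := by
  have ht : 0 < t := hs.trans hst
  have h1 : (0:ℝ) < s / t := by positivity
  have h2 : (0:ℝ) < 1 - s / t := by rw [sub_pos]; exact (div_lt_one ht).2 hst
  have key := M.concave.2 (mem_Ici.2 (le_of_lt ht)) (mem_Ici.2 (le_refl (0:ℝ)))
    (ne_of_gt ht) h1 h2 (by ring)
  simp only [smul_eq_mul, mul_zero, add_zero, M.m_zero] at key
  rw [div_mul_cancel₀ s (ne_of_gt ht)] at key
  rw [div_lt_div_iff₀ ht hs]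
  have := mul_lt_mul_of_pos_right key ht
  have hc : s / t * M.m t * t = M.m t * s := by field_simp
  linarith [hc ▸ this]

lemma st6_rr_lt_beta {t : ℝ} (ht : 0 < t) : M.m t / t < M.β := by
  have h2 : M.m (t/2) / (t/2) ≤ M.β := by
    apply ge_of_tendsto M.β_lim
    filter_upwards [self_mem_nhdsWithin, Ioo_mem_nhdsGT_of_mem (by constructor <;> linarith :
      (0:ℝ) ∈ Ico 0 (t/2))] with s hs hs2
    exact le_of_lt (st6_rr_anti M hs hs2.2)
  exact lt_of_lt_of_le (st6_rr_anti M (by linarith) (by linarith)) h2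

lemma st6_ratio_zero : ratio M 0 = M.β := if_pos rfl

lemma st6_ratio_of_pos {t : ℝ} (ht : 0 < t) : ratio M t = M.m t / t := if_neg (ne_of_gt ht)

lemma st6_ratio_pos {t : ℝ} (ht : 0 ≤ t) : 0 < ratio M t := by
  rcases eq_or_lt_of_le ht with h | h
  · rw [← h, st6_ratio_zero]; exact M.β_mem.1
  · rw [st6_ratio_of_pos M h]; exact div_pos (st6_m_pos M h) h

lemma st6_ratio_anti {s t : ℝ} (hs : 0 ≤ s) (hst : s < t) : ratio M t < ratio M s := by
  rw [st6_ratio_of_pos M (hs.trans_lt hst)]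
  rcases eq_or_lt_of_le hs with h | h
  · rw [← h, st6_ratio_zero]; exact st6_rr_lt_beta M (h ▸ hst)
  · rw [st6_ratio_of_pos M h]; exact st6_rr_anti M h hst

lemma st6_surj {y : ℝ} (hy : 1 / M.β < y) : ∃ t, 0 < t ∧ t / M.m t = y := by
  have hβ := M.β_mem.1
  have hinv : Tendsto (fun t => t / M.m t) (nhdsWithin 0 (Ioi 0)) (nhds (1 / M.β)) := by
    have h := M.β_lim.inv₀ (ne_of_gt hβ)
    rw [one_div]
    refine h.congr' ?_
    filter_upwards [self_mem_nhdsWithin] with t (ht : 0 < t)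
    rw [inv_div]
  have hev : ∀ᶠ t in nhdsWithin 0 (Ioi 0), t / M.m t < y :=
    hinv.eventually (Filter.Tendsto.eventually_lt_const hy tendsto_id)
  obtain ⟨t0, ht0y, ht0⟩ := (hev.and self_mem_nhdsWithin).exists
  have ht0pos : 0 < t0 := ht0
  set T : ℝ := max (y + 1) (t0 + 1) with hT
  have hTpos : 0 < T := lt_of_lt_of_le (by linarith) (le_max_right _ _)
  have hTy : y < T / M.m T := by
    have h1 : M.m T ≤ 1 := le_trans (M.m_le T (le_of_lt hTpos)) (min_le_left _ _)
    have h2 : 0 < M.m T := st6_m_pos M hTpos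
    calc y < y + 1 := by linarith
    _ ≤ T := le_max_left _ _
    _ = T / 1 := (div_one T).symm
    _ ≤ T / M.m T := by apply div_le_div_of_nonneg_left (le_of_lt hTpos) h2 h1
  have ht0T : t0 ≤ T := le_trans (by linarith) (le_max_right _ _)
  have hcont : ContinuousOn (fun t => t / M.m t) (Icc t0 T) := by
    apply ContinuousOn.div continuousOn_id
    · intro t htm
      exact ((M.diff1 t (lt_of_lt_of_le ht0pos htm.1)).continuousAt).continuousWithinAt
    · intro t htm
      exact ne_of_gt (st6_m_pos M (lt_of_lt_of_le ht0pos htm.1))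
  have hIcc := intermediate_value_Icc ht0T hcont
  have hmem : y ∈ Icc (t0 / M.m t0) (T / M.m T) := ⟨le_of_lt ht0y, le_of_lt hTy⟩
  obtain ⟨t, htmem, htval⟩ := hIcc hmem
  exact ⟨t, lt_of_lt_of_le ht0pos htmem.1, htval⟩

set_option maxHeartbeats 2000000 in
/-- Existence and essential uniqueness of the search equilibrium: if
`∫ w dP > 0` and `w̄` is the `P`-essential supremum of `w`, there is a search equilibrium
`(τ*, u*)` with `0 < u* < β w̄` and `τ*(ν) = g(w(ν)/u*) · 1[β w(ν) > u*]` `P`-a.e.; any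
search equilibrium `(τ, u)` satisfies `u = u*` and `τ = τ*` `P`-a.e. -/
theorem stmt6 (M : MeetingFunction) (g : ℝ → ℝ)
    (hg0 : g (1 / M.β) = 0)
    (hgmono : StrictMonoOn g (Ici (1 / M.β)))
    (hgcont : ContinuousOn g (Ici (1 / M.β)))
    (hgtop : Tendsto g atTop atTop)
    (hginv : ∀ t > (0:ℝ), g (t / M.m t) = t)
    (k : ℝ) (hk : 0 < k)
    (P : Measure PM) [IsProbabilityMeasure P]
    (lam : Θ → ℝ) (hlam_meas : Measurable lam) (hlam : ∀ θ, lam θ ∈ Icc (0:ℝ) 1)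
    (hpos : 0 < ∫ ν, wOf lam ν ∂P) :
    ∃ τstar : PM → ℝ, ∃ ustar : ℝ,
      IsSearchEq M k P (wOf lam) τstar ustar ∧
      0 < ustar ∧ ustar < M.β * essSup (wOf lam) P ∧
      (∀ᵐ ν ∂P, τstar ν =
        if M.β * wOf lam ν > ustar then g (wOf lam ν / ustar) else 0) ∧
      (∀ τ : PM → ℝ, ∀ u : ℝ, IsSearchEq M k P (wOf lam) τ u →
        u = ustar ∧ τ =ᵐ[P] τstar) := by
  classical
  set w : PM → ℝ := wOf lam with hw_def
  have hβ : 0 < M.β := M.β_mem.1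
  have hw_meas : Measurable w := st6_measurable_wOf hlam_meas hlam
  have hw01 : ∀ ν, w ν ∈ Icc (0:ℝ) 1 := st6_wOf_mem hlam
  have hw_int : Integrable w P :=
    Integrable.mono' (integrable_const 1) hw_meas.aestronglyMeasurable
      (ae_of_all _ fun ν => by
        rw [Real.norm_eq_abs, abs_of_nonneg (hw01 ν).1]; exact (hw01 ν).2)
  -- extension of g
  set G : ℝ → ℝ := fun x => g (max x (1/M.β)) with hG_def
  have hG_cont : Continuous G :=
    hgcont.comp_continuous (continuous_id.max continuous_const)
      (fun x => mem_Ici.2 (le_max_right _ _))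
  have hG_mono : Monotone G := fun x y hxy =>
    hgmono.monotoneOn (mem_Ici.2 (le_max_right _ _)) (mem_Ici.2 (le_max_right _ _))
      (max_le_max hxy (le_refl _))
  have hG_eq : ∀ x, 1/M.β ≤ x → G x = g x := fun x hx => by
    show g (max x (1/M.β)) = g x
    rw [max_eq_left hx]
  have hG_nonneg : ∀ x, 0 ≤ G x := fun x => by
    rw [← hg0]
    exact hgmono.monotoneOn (mem_Ici.2 (le_refl _)) (mem_Ici.2 (le_max_right _ _))
      (le_max_right _ _)
  have hG_beta : G (1/M.β) = 0 := by rw [hG_eq _ (le_refl _), hg0]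
  -- inverse property of g
  have hgprop : ∀ y, 1/M.β < y → 0 < g y ∧ g y / M.m (g y) = y := by
    intro y hy
    obtain ⟨t, ht, htv⟩ := st6_surj M hy
    have hgy : g y = t := by rw [← htv, hginv t ht]
    rw [hgy]
    exact ⟨ht, htv⟩
  -- the candidate tightness family
  set T : ℝ → PM → ℝ := fun u ν => if u < M.β * w ν then G (w ν / u) else 0 with hT_def
  have hT_nonneg : ∀ u ν, 0 ≤ T u ν := by
    intro u ν
    by_cases h : u < M.β * w ν
    · simp only [hT_def, if_pos h]; exact hG_nonneg _
    · simp only [hT_def, if_neg h]; exact le_refl 0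
  have hcond : ∀ {u x : ℝ}, 0 < u → (u < M.β * x ↔ 1/M.β < x / u) := by
    intro u x hu
    rw [lt_div_iff₀ hu, div_mul_eq_mul_div, one_mul, div_lt_iff₀ hβ, mul_comm M.β x]
  have hT_eq_g : ∀ u ν, 0 < u →
      T u ν = if M.β * w ν > u then g (w ν / u) else 0 := by
    intro u ν hu
    by_cases h : u < M.β * w ν
    · simp only [hT_def, if_pos h, gt_iff_lt]
      exact hG_eq _ (le_of_lt ((hcond hu).1 h))
    · simp only [hT_def, if_neg h, gt_iff_lt]
  have hT_eqm : ∀ u, 0 < u → ∀ ν,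
      ratio M (T u ν) * w ν ≤ u ∧ (0 < T u ν → ratio M (T u ν) * w ν = u) := by
    intro u hu ν
    by_cases h : u < M.β * w ν
    · have hy : 1/M.β < w ν / u := (hcond hu).1 h
      obtain ⟨hgp, hgv⟩ := hgprop _ hy
      have hTv : T u ν = g (w ν / u) := by
        simp only [hT_def, if_pos h]; exact hG_eq _ (le_of_lt hy)
      have hwpos : 0 < w ν := by nlinarith
      have hm : 0 < M.m (g (w ν / u)) := st6_m_pos M hgp
      have h1 : g (w ν / u) * u = w ν * M.m (g (w ν / u)) :=
        (div_eq_div_iff (ne_of_gt hm) (ne_of_gt hu)).1 hgv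
      have key : ratio M (T u ν) * w ν = u := by
        rw [hTv, st6_ratio_of_pos M hgp, div_mul_eq_mul_div, div_eq_iff (ne_of_gt hgp)]
        linarith
      exact ⟨le_of_eq key, fun _ => key⟩
    · have hTv : T u ν = 0 := by simp only [hT_def, if_neg h]
      rw [hTv, st6_ratio_zero]
      exact ⟨not_lt.1 h, fun hc => absurd hc (lt_irrefl 0)⟩
  have hT_meas : ∀ u, Measurable (T u) := fun u =>
    Measurable.ite (measurableSet_lt measurable_const (measurable_const.mul hw_meas))
      (hG_cont.measurable.comp (hw_meas.div_const u)) measurable_const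
  have hT_le : ∀ u ν, 0 < u → T u ν ≤ G (w ν / u) := by
    intro u ν hu
    by_cases h : u < M.β * w ν
    · simp only [hT_def, if_pos h]; exact le_refl _
    · simp only [hT_def, if_neg h]; exact hG_nonneg _
  have hT_bdd : ∀ u ν, 0 < u → T u ν ≤ G (1/u) := by
    intro u ν hu
    refine le_trans (hT_le u ν hu) (hG_mono ?_)
    exact (div_le_div_iff_of_pos_right hu).2 (hw01 ν).2
  have hT_int : ∀ u, 0 < u → Integrable (T u) P := fun u hu =>
    Integrable.mono' (integrable_const (G (1/u))) (hT_meas u).aestronglyMeasurable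
      (ae_of_all _ fun ν => by
        rw [Real.norm_eq_abs, abs_of_nonneg (hT_nonneg u ν)]; exact hT_bdd u ν hu)
  set F : ℝ → ℝ := fun u => ∫ ν, T u ν ∂P with hF_def
  -- strict monotonicity of T and F
  have hT_mono : ∀ u1 u2 ν, 0 < u1 → u1 < u2 → T u2 ν ≤ T u1 ν := by
    intro u1 u2 ν h1 h12
    by_cases h : u2 < M.β * w ν
    · have h' : u1 < M.β * w ν := h12.trans h
      simp only [hT_def, if_pos h, if_pos h']
      apply hG_mono
      have hwpos : 0 < w ν := by nlinarith
      exact div_le_div_of_nonneg_left (le_of_lt hwpos) h1 (le_of_lt h12)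
    · simp only [hT_def, if_neg h]; exact hT_nonneg u1 ν
  have hT_strict : ∀ u1 u2 ν, 0 < u1 → u1 < u2 → u2 < M.β * w ν → T u2 ν < T u1 ν := by
    intro u1 u2 ν h1 h12 h
    have hu2 : 0 < u2 := h1.trans h12
    have h' : u1 < M.β * w ν := h12.trans h
    have hwpos : 0 < w ν := by nlinarith
    rw [hT_eq_g u1 ν h1, hT_eq_g u2 ν hu2, if_pos h, if_pos h']
    apply hgmono (mem_Ici.2 (le_of_lt ((hcond hu2).1 h))) (mem_Ici.2 (le_of_lt ((hcond h1).1 h')))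
    exact div_lt_div_of_pos_left hwpos h1 h12
  have hF_strict : ∀ u1 u2, 0 < u1 → u1 < u2 → 0 < F u2 → F u2 < F u1 := by
    intro u1 u2 h1 h12 hpos2
    have hu2 : 0 < u2 := h1.trans h12
    have hsupp : 0 < P (Function.support (T u2)) :=
      (integral_pos_iff_support_of_nonneg (hT_nonneg u2) (hT_int u2 hu2)).1 hpos2
    have hsub : Function.support (T u2) ⊆ {ν | u2 < M.β * w ν} := by
      intro ν hν
      by_contra h
      rw [mem_setOf_eq] at h
      exact hν (by simp only [hT_def, if_neg h])
    have hDsub : Function.support (T u2) ⊆ Function.support (fun ν => T u1 ν - T u2 ν) := by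
      intro ν hν
      have := hT_strict u1 u2 ν h1 h12 (hsub hν)
      simp only [Function.mem_support]
      intro hc
      rw [sub_eq_zero] at hc
      exact absurd hc.symm (ne_of_lt this)
    have hD_pos : 0 < ∫ ν, (T u1 ν - T u2 ν) ∂P := by
      rw [integral_pos_iff_support_of_nonneg
        (fun ν => sub_nonneg.2 (hT_mono u1 u2 ν h1 h12))
        ((hT_int u1 h1).sub (hT_int u2 hu2))]
      exact lt_of_lt_of_le hsupp (measure_mono hDsub)
    rw [integral_sub (hT_int u1 h1) (hT_int u2 hu2)] at hD_pos
    simp only [hF_def]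
    linarith
  -- continuity of F
  have hT_contAt : ∀ ν u0, 0 < u0 → ContinuousAt (fun u => T u ν) u0 := by
    intro ν u0 hu0
    rcases lt_trichotomy u0 (M.β * w ν) with h | h | h
    · have hc : ContinuousAt (fun u => G (w ν / u)) u0 :=
        hG_cont.continuousAt.comp (continuousAt_const.div continuousAt_id (ne_of_gt hu0))
      apply hc.congr
      filter_upwards [Iio_mem_nhds h] with u hu
      simp only [hT_def]
      rw [if_pos (mem_Iio.1 hu)]
    · have hwpos : 0 < w ν := by nlinarith
      have hnc : ¬ (u0 < M.β * w ν) := by rw [← h]; exact lt_irrefl u0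
      have hval : T u0 ν = 0 := by
        simp only [hT_def, if_neg hnc]
      rw [ContinuousAt, hval]
      have hupper : Tendsto (fun u => G (w ν / u)) (𝓝 u0) (𝓝 0) := by
        have hdiv : Tendsto (fun u => w ν / u) (𝓝 u0) (𝓝 (w ν / u0)) :=
          continuousAt_const.div continuousAt_id (ne_of_gt hu0)
        have h2 : Tendsto (fun u => G (w ν / u)) (𝓝 u0) (𝓝 (G (w ν / u0))) :=
          (hG_cont.continuousAt).comp hdiv
        have h3 : w ν / u0 = 1/M.β := by
          rw [h, mul_comm, div_mul_cancel_left₀ (ne_of_gt hwpos), one_div]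
        rwa [h3, hG_beta] at h2
      apply tendsto_of_tendsto_of_tendsto_of_le_of_le' tendsto_const_nhds hupper
      · exact Eventually.of_forall (fun u => hT_nonneg u ν)
      · filter_upwards [Ioi_mem_nhds (by linarith : (0:ℝ) < u0)] with u hu
        exact hT_le u ν hu
    · apply continuousAt_const.congr
      filter_upwards [Ioi_mem_nhds h] with u hu
      have hnc : ¬ (u < M.β * w ν) := not_lt.2 (le_of_lt (mem_Ioi.1 hu))
      simp only [hT_def]
      rw [if_neg hnc]
  have hF_contAt : ∀ u0, 0 < u0 → ContinuousAt F u0 := by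
    intro u0 hu0
    apply continuousAt_of_dominated (bound := fun _ => G (2/u0))
    · exact Eventually.of_forall fun u => (hT_meas u).aestronglyMeasurable
    · filter_upwards [Ioo_mem_nhds (by linarith : u0/2 < u0) (by linarith : u0 < u0 + 1)]
        with u hu
      apply ae_of_all
      intro ν
      have hupos : 0 < u := by have := hu.1; linarith
      rw [Real.norm_eq_abs, abs_of_nonneg (hT_nonneg u ν)]
      refine le_trans (hT_bdd u ν hupos) (hG_mono ?_)
      rw [div_le_div_iff₀ hupos hu0]
      have := hu.1
      linarith
    · exact integrable_const _
    · exact ae_of_all _ fun ν => hT_contAt ν u0 hu0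
  -- essential supremum facts
  have hwb_ae : ∀ᵐ ν ∂P, w ν ≤ essSup w P :=
    ae_le_essSup (isBoundedUnder_of ⟨1, fun ν => (hw01 ν).2⟩)
  have hwb_pos : 0 < essSup w P := by
    have hle : ∫ ν, w ν ∂P ≤ essSup w P := by
      calc ∫ ν, w ν ∂P ≤ ∫ _, essSup w P ∂P :=
            integral_mono_ae hw_int (integrable_const _) hwb_ae
      _ = essSup w P := by simp
    exact lt_of_lt_of_le hpos hle
  set b : ℝ := M.β * essSup w P with hb_def
  have hb_pos : 0 < b := mul_pos hβ hwb_pos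
  have hFb : F b = 0 := by
    have hz : T b =ᵐ[P] fun _ => (0:ℝ) := by
      filter_upwards [hwb_ae] with ν hν
      simp only [hT_def]
      rw [if_neg (not_lt.2 (mul_le_mul_of_nonneg_left hν (le_of_lt hβ)))]
    simp only [hF_def]
    rw [integral_congr_ae hz, integral_zero]
  -- a positive-measure set where w is bounded below
  have hS : ∃ n : ℕ, P {ν | 1/((n:ℝ)+1) ≤ w ν} ≠ 0 := by
    by_contra hall
    push_neg at hall
    have h0 : P {ν | 0 < w ν} = 0 := by
      have hsub : {ν | 0 < w ν} ⊆ ⋃ n : ℕ, {ν | 1/((n:ℝ)+1) ≤ w ν} := by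
        intro ν hν
        rw [mem_setOf_eq] at hν
        obtain ⟨n, hn⟩ := exists_nat_one_div_lt hν
        exact mem_iUnion.2 ⟨n, le_of_lt hn⟩
      exact measure_mono_null hsub (measure_iUnion_null fun n => hall n)
    have hae : ∀ᵐ ν ∂P, w ν ≤ 0 := by
      rw [ae_iff]
      simpa only [not_le] using h0
    exact absurd (integral_nonpos_of_ae hae) (not_le.2 hpos)
  obtain ⟨n, hSn⟩ := hS
  set ε : ℝ := 1/((n:ℝ)+1) with hε_def
  set S : Set PM := {ν | ε ≤ w ν} with hS_def
  have hε : 0 < ε := by positivity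
  have hS_meas : MeasurableSet S := measurableSet_le measurable_const hw_meas
  set p : ℝ := (P S).toReal with hp_def
  have hp : 0 < p := ENNReal.toReal_pos hSn (measure_ne_top _ _)
  have hεwb : ε ≤ essSup w P := by
    by_contra hlt
    push_neg at hlt
    apply hSn
    have h2 : ∀ᵐ ν ∂P, ν ∉ S := by
      filter_upwards [hwb_ae] with ν hν
      intro hc
      exact absurd (le_trans hc hν) (not_le.2 hlt)
    rw [ae_iff] at h2
    simpa only [not_not, setOf_mem_eq] using h2
  -- choose a
  obtain ⟨R, hR⟩ := eventually_atTop.1 (hgtop.eventually_ge_atTop (1/(k*p)))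
  set R' : ℝ := max R (1/M.β) + 1 with hR'_def
  have hR'β : 1/M.β < R' := lt_of_le_of_lt (le_max_right _ _) (lt_add_one _)
  have hR'pos : 0 < R' := lt_trans (by positivity) hR'β
  set a : ℝ := min (ε/R') (M.β*ε/2) with ha_def
  have ha_pos : 0 < a := lt_min (div_pos hε hR'pos) (by positivity)
  have hab : a < b := by
    calc a ≤ M.β*ε/2 := min_le_right _ _
    _ < M.β*ε := by nlinarith
    _ ≤ b := by rw [hb_def]; nlinarith
  have haR : R' ≤ ε/a := by
    have h1 : a ≤ ε/R' := min_le_left _ _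
    rw [le_div_iff₀ ha_pos]
    calc R' * a ≤ R' * (ε/R') := mul_le_mul_of_nonneg_left h1 (le_of_lt hR'pos)
    _ = ε := by field_simp
  have hg_big : 1/(k*p) ≤ g (ε/a) := by
    refine hR _ (le_trans (le_trans (le_max_left R (1/M.β)) ?_) haR)
    rw [hR'_def]
    exact le_of_lt (lt_add_one _)
  have hFa : 1/k ≤ F a := by
    have hlow : ∀ ν, S.indicator (fun _ => g (ε/a)) ν ≤ T a ν := by
      intro ν
      by_cases hν : ν ∈ S
      · rw [indicator_of_mem hν]
        have hwε : ε ≤ w ν := hν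
        have hcond2 : a < M.β * w ν := by
          calc a ≤ M.β*ε/2 := min_le_right _ _
          _ < M.β*ε := by nlinarith
          _ ≤ M.β * w ν := by nlinarith
        rw [hT_eq_g a ν ha_pos, if_pos hcond2]
        apply hgmono.monotoneOn
        · exact mem_Ici.2 (le_trans (le_of_lt hR'β) haR)
        · exact mem_Ici.2 (le_of_lt ((hcond ha_pos).1 hcond2))
        · exact (div_le_div_iff_of_pos_right ha_pos).2 hwε
      · rw [indicator_of_notMem hν]
        exact hT_nonneg a ν
    calc 1/k = (1/(k*p)) * p := by
          rw [div_mul_eq_mul_div, one_mul, mul_comm k p, ← div_div, div_self (ne_of_gt hp)]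
    _ ≤ g (ε/a) * p := mul_le_mul_of_nonneg_right hg_big (le_of_lt hp)
    _ = ∫ ν, S.indicator (fun _ => g (ε/a)) ν ∂P := by
        rw [integral_indicator_const _ hS_meas, smul_eq_mul, hp_def, mul_comm, measureReal_def]
    _ ≤ F a := integral_mono ((integrable_const _).indicator hS_meas)
        (hT_int a ha_pos) hlow
  -- intermediate value theorem
  have hcontIcc : ContinuousOn F (Icc a b) := fun u hu =>
    (hF_contAt u (lt_of_lt_of_le ha_pos hu.1)).continuousWithinAt
  have hmemIvt : (1/k) ∈ Icc (F b) (F a) := ⟨by rw [hFb]; positivity, hFa⟩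
  obtain ⟨ustar, hustar_mem, hustar_val⟩ := intermediate_value_Icc' (le_of_lt hab) hcontIcc hmemIvt
  have hustar_pos : 0 < ustar := lt_of_lt_of_le ha_pos hustar_mem.1
  have hustar_lt : ustar < b := by
    rcases eq_or_lt_of_le hustar_mem.2 with h | h
    · exfalso
      rw [h, hFb] at hustar_val
      have : (0:ℝ) < 1/k := by positivity
      rw [← hustar_val] at this
      exact lt_irrefl _ this
    · exact h
  have hsum : k * ∫ ν, T ustar ν ∂P = 1 := by
    have : ∫ ν, T ustar ν ∂P = 1/k := hustar_val
    rw [this]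
    field_simp
  refine ⟨T ustar, ustar,
    ⟨hT_nonneg ustar, hT_int ustar hustar_pos, hsum, ae_of_all _ (hT_eqm ustar hustar_pos)⟩,
    hustar_pos, hustar_lt,
    ae_of_all _ (fun ν => hT_eq_g ustar ν hustar_pos), ?_⟩
  -- uniqueness
  rintro τ u ⟨hτ_nonneg, hτ_int, hτ_sum, hτ_ae⟩
  have hu_pos : 0 < u := by
    by_contra hle
    push_neg at hle
    have hwle : ∀ᵐ ν ∂P, w ν ≤ 0 := by
      filter_upwards [hτ_ae] with ν hν
      obtain ⟨h1, h2⟩ := hν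
      rcases eq_or_lt_of_le (hτ_nonneg ν) with hz | hz
      · rw [← hz, st6_ratio_zero] at h1
        nlinarith
      · have heq := h2 hz
        have hrp := st6_ratio_pos M (le_of_lt hz)
        nlinarith
    exact absurd (integral_nonpos_of_ae hwle) (not_le.2 hpos)
  have hτ_eq : τ =ᵐ[P] T u := by
    filter_upwards [hτ_ae] with ν hν
    obtain ⟨h1, h2⟩ := hν
    by_cases hc : u < M.β * w ν
    · have hτν : 0 < τ ν := by
        rcases eq_or_lt_of_le (hτ_nonneg ν) with hz | hz
        · exfalso
          rw [← hz, st6_ratio_zero] at h1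
          exact absurd h1 (not_le.2 hc)
        · exact hz
      have heq := h2 hτν
      have hwpos : 0 < w ν := by nlinarith
      rw [st6_ratio_of_pos M hτν] at heq
      have hmτ : 0 < M.m (τ ν) := st6_m_pos M hτν
      have heq' : M.m (τ ν) * w ν = u * τ ν := by
        field_simp at heq
        linarith
      have hrat : τ ν / M.m (τ ν) = w ν / u := by
        rw [div_eq_div_iff (ne_of_gt hmτ) (ne_of_gt hu_pos)]
        nlinarith
      calc τ ν = g (τ ν / M.m (τ ν)) := (hginv _ hτν).symm
      _ = g (w ν / u) := by rw [hrat]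
      _ = T u ν := by rw [hT_eq_g u ν hu_pos, if_pos hc]
    · have hτν : τ ν = 0 := by
        by_contra hne
        have hz : 0 < τ ν := lt_of_le_of_ne (hτ_nonneg ν) (Ne.symm hne)
        have heq := h2 hz
        have hrp : 0 < ratio M (τ ν) := st6_ratio_pos M (le_of_lt hz)
        have hwpos : 0 < w ν := by nlinarith
        have hlt : ratio M (τ ν) < M.β := by
          have := st6_ratio_anti M (le_refl 0) hz
          rwa [st6_ratio_zero] at this
        have : u < M.β * w ν := by
          rw [← heq]
          nlinarith
        exact hc this
      rw [hτν]
      simp only [hT_def, if_neg hc]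
  have hFu : F u = 1/k := by
    have hi : ∫ ν, τ ν ∂P = F u := integral_congr_ae hτ_eq
    rw [← hi]
    rw [eq_div_iff (ne_of_gt hk)]
    linarith [hτ_sum]
  have hu_eq : u = ustar := by
    by_contra hne
    rcases lt_or_gt_of_ne hne with h | h
    · have := hF_strict u ustar hu_pos h (by rw [hustar_val]; positivity)
      rw [hFu, hustar_val] at this
      exact lt_irrefl _ this
    · have := hF_strict ustar u hustar_pos h (by rw [hFu]; positivity)
      rw [hFu, hustar_val] at this
      exact lt_irrefl _ this
  exact ⟨hu_eq, hu_eq ▸ hτ_eq⟩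
end
end

section
/- Define Φ(u) := k ∫ m(g(w(ν)/u) · 1[β·w(ν) > u]) w(ν) dP(ν) for u > 0, and let w̄ := P-essential supremum of w. Then Φ is continuous and weakly decreasing on (0,∞), Φ(u) = 0 for all u ≥ β·w̄, and lim_{u→0+} Φ(u) = α·k·∫ w dP. Consequently, if ∫ w dP > 0, then Φ has a unique fixed point, which lies in (0, β·w̄). -/
open MeasureTheory Set Filter Topology ProbabilityTheory

noncomputable section

lemma measurable_eval_pm {s : Set Θ} (hs : MeasurableSet s) :
    Measurable (fun ν : PM => (ν : Measure Θ) s) := by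
  refine MeasurableSpace.induction_on_inter
    (C := fun s _ => Measurable fun ν : PM => (ν : Measure Θ) s)
    (BorelSpace.measurable_eq) isPiSystem_isOpen ?_ ?_ ?_ ?_ _ hs
  · simp
  · intro G hG
    have lsc : LowerSemicontinuous (fun ν : PM => (ν : Measure Θ) G) := by
      intro ν y hy
      have key : (ν : Measure Θ) G ≤ liminf (fun ν' : PM => (ν' : Measure Θ) G) (𝓝 ν) :=
        ProbabilityMeasure.le_liminf_measure_open_of_tendsto tendsto_id hG
      exact eventually_lt_of_lt_liminf (lt_of_lt_of_le hy key)
    exact lsc.measurable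
  · intro t ht iht
    have h : (fun ν : PM => (ν : Measure Θ) tᶜ) = fun ν : PM => 1 - (ν : Measure Θ) t := by
      funext ν
      rw [measure_compl ht (measure_ne_top _ t), measure_univ]
    rw [h]
    exact measurable_const.sub iht
  · intro f hdisj hmeas ihf
    have h : (fun ν : PM => (ν : Measure Θ) (⋃ i, f i)) =
        fun ν : PM => ∑' i, (ν : Measure Θ) (f i) := by
      funext ν; exact measure_iUnion hdisj hmeas
    rw [h]
    exact Measurable.ennreal_tsum ihf

lemma measurable_toMeasure_pm : Measurable (fun ν : PM => (ν : Measure Θ)) :=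
  Measure.measurable_of_measurable_coe _ fun _s hs => measurable_eval_pm hs

lemma measurable_wOf (lam : Θ → ℝ) (hlam_meas : Measurable lam)
    (hlam : ∀ θ, lam θ ∈ Icc (0:ℝ) 1) : Measurable (wOf lam) := by
  have hf : Measurable fun θ : Θ => lam θ * (θ : ℝ) := hlam_meas.mul measurable_subtype_coe
  have heq : wOf lam = fun ν : PM =>
      (∫⁻ θ, ENNReal.ofReal (lam θ * (θ:ℝ)) ∂(ν : Measure Θ)).toReal := by
    funext ν
    rw [wOf, integral_eq_lintegral_of_nonneg_ae (ae_of_all _ fun θ => mul_nonneg (hlam θ).1 θ.2.1)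
      hf.aestronglyMeasurable]
  rw [heq]
  exact ENNReal.measurable_toReal.comp
    ((Measure.measurable_lintegral (ENNReal.measurable_ofReal.comp hf)).comp
      measurable_toMeasure_pm)

lemma wOf_nonneg (lam : Θ → ℝ) (hlam : ∀ θ, lam θ ∈ Icc (0:ℝ) 1) (ν : PM) :
    0 ≤ wOf lam ν :=
  integral_nonneg fun θ => mul_nonneg (hlam θ).1 θ.2.1

lemma wOf_le_one (lam : Θ → ℝ) (hlam_meas : Measurable lam)
    (hlam : ∀ θ, lam θ ∈ Icc (0:ℝ) 1) (ν : PM) : wOf lam ν ≤ 1 := by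
  have hle : ∀ θ : Θ, lam θ * (θ:ℝ) ≤ 1 := fun θ => by
    calc lam θ * (θ:ℝ) ≤ 1 * 1 := mul_le_mul (hlam θ).2 θ.2.2 θ.2.1 zero_le_one
      _ = 1 := one_mul 1
  have hint : Integrable (fun θ : Θ => lam θ * (θ:ℝ)) (ν : Measure Θ) :=
    (integrable_const (1:ℝ)).mono' (hlam_meas.mul measurable_subtype_coe).aestronglyMeasurable
      (ae_of_all _ fun θ => by
        rw [Real.norm_eq_abs, abs_of_nonneg (mul_nonneg (hlam θ).1 θ.2.1)]
        exact hle θ)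
  calc wOf lam ν ≤ ∫ _θ, (1:ℝ) ∂(ν : Measure Θ) :=
        integral_mono hint (integrable_const 1) hle
    _ = 1 := by simp

lemma MeetingFunction.m_nonneg (M : MeetingFunction) {t : ℝ} (ht : 0 ≤ t) : 0 ≤ M.m t := by
  rcases eq_or_lt_of_le ht with h | h
  · rw [← h, M.m_zero]
  · rw [← M.m_zero]
    exact (M.mono self_mem_Ici (le_of_lt h) h).le

lemma MeetingFunction.m_le_one (M : MeetingFunction) {t : ℝ} (ht : 0 ≤ t) : M.m t ≤ 1 :=
  (M.m_le t ht).trans (min_le_left _ _)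

lemma MeetingFunction.m_le_self (M : MeetingFunction) {t : ℝ} (ht : 0 ≤ t) : M.m t ≤ t :=
  (M.m_le t ht).trans (min_le_right _ _)

section Aux

variable (M : MeetingFunction) {g : ℝ → ℝ}
  (hg0 : g (1 / M.β) = 0)
  (hgmono : StrictMonoOn g (Ici (1 / M.β)))
  (hgcont : ContinuousOn g (Ici (1 / M.β)))

include hg0 hgmono in
lemma g_nonneg_aux {y : ℝ} (hy : 1 / M.β ≤ y) : 0 ≤ g y := by
  rcases eq_or_lt_of_le hy with h | h
  · rw [← h, hg0]
  · rw [← hg0]; exact (hgmono self_mem_Ici hy h).le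

lemma one_div_lt_div_aux {W u : ℝ} (hβ : 0 < M.β) (hu : 0 < u) (h : u < M.β * W) :
    1 / M.β < W / u := by
  rw [div_lt_div_iff₀ hβ hu]
  nlinarith

include hg0 hgmono hgcont in
lemma contAux {W u₀ : ℝ} (hW : 0 ≤ W) (hu₀ : 0 < u₀) :
    ContinuousAt (fun u => M.m (if M.β * W > u then g (W / u) else 0) * W) u₀ := by
  have hβ : 0 < M.β := M.β_mem.1
  rcases lt_trichotomy u₀ (M.β * W) with hlt | heq | hgt
  · -- u₀ < β W : locally the smooth branch
    have hWpos : 0 < W := by nlinarith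
    have h1 : 1 / M.β < W / u₀ := one_div_lt_div_aux M hβ hu₀ hlt
    have cdiv : ContinuousAt (fun u : ℝ => W / u) u₀ :=
      continuousAt_const.div continuousAt_id hu₀.ne'
    have cg : ContinuousAt g (W / u₀) := hgcont.continuousAt (Ici_mem_nhds h1)
    have hgpos : 0 < g (W / u₀) := by
      rw [← hg0]; exact hgmono self_mem_Ici h1.le h1
    have cm : ContinuousAt M.m (g (W / u₀)) := (M.diff1 _ hgpos).continuousAt
    have cgd : ContinuousAt (fun u : ℝ => g (W / u)) u₀ := cg.comp cdiv
    have cmgd : ContinuousAt (fun u : ℝ => M.m (g (W / u))) u₀ :=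
      ContinuousAt.comp (f := fun u : ℝ => g (W / u)) (g := M.m) cm cgd
    have cmain : ContinuousAt (fun u : ℝ => M.m (g (W / u)) * W) u₀ :=
      cmgd.mul continuousAt_const
    refine cmain.congr ?_
    filter_upwards [isOpen_Ioo.mem_nhds (show u₀ ∈ Ioo 0 (M.β * W) from ⟨hu₀, hlt⟩)] with u hu
    rw [if_pos hu.2]
  · -- boundary case: squeeze
    have hWpos : 0 < W := by nlinarith
    set G : ℝ → ℝ := fun u => if M.β * W > u then g (W / u) else 0 with hG
    have hq : Tendsto (fun u : ℝ => W / u) (𝓝 u₀) (𝓝 (1 / M.β)) := by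
      have h : ContinuousAt (fun u : ℝ => W / u) u₀ :=
        continuousAt_const.div continuousAt_id hu₀.ne'
      have hWu : W / u₀ = 1 / M.β := by
        rw [heq]
        field_simp
      rw [← hWu]
      exact h
    have hGnn : ∀ u : ℝ, 0 < u → 0 ≤ G u := by
      intro u hu
      by_cases hc : M.β * W > u
      · rw [hG]; simp only [if_pos hc]
        exact g_nonneg_aux M hg0 hgmono (one_div_lt_div_aux M hβ hu hc).le
      · rw [hG]; simp only [if_neg hc]; exact le_rfl
    have hGtend : Tendsto G (𝓝 u₀) (𝓝 0) := by
      rw [Metric.tendsto_nhds]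
      intro ε hε
      have hgc : Tendsto g (𝓝[Ici (1 / M.β)] (1 / M.β)) (𝓝 0) := by
        have h := hgcont _ (self_mem_Ici (a := 1 / M.β))
        rwa [ContinuousWithinAt, hg0] at h
      have hball := hgc (Metric.ball_mem_nhds 0 hε)
      rw [mem_map, mem_nhdsWithin] at hball
      obtain ⟨t, ht_open, ht_mem, ht_sub⟩ := hball
      have h1 : ∀ᶠ u in 𝓝 u₀, W / u ∈ t := hq (ht_open.mem_nhds ht_mem)
      have h2 : ∀ᶠ u in 𝓝 u₀, 0 < u := eventually_gt_nhds hu₀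
      filter_upwards [h1, h2] with u hut hupos
      rw [Real.dist_eq, sub_zero]
      by_cases hc : M.β * W > u
      · have hmem : W / u ∈ Ici (1 / M.β) := (one_div_lt_div_aux M hβ hupos hc).le
        have := ht_sub ⟨hut, hmem⟩
        simp only [mem_preimage, Metric.mem_ball, Real.dist_eq, sub_zero] at this
        rw [hG]; simpa [if_pos hc] using this
      · rw [hG]; simpa [if_neg hc] using hε
    have h0 : ∀ᶠ u in 𝓝 u₀, 0 ≤ M.m (G u) * W := by
      filter_upwards [eventually_gt_nhds hu₀] with u hupos
      exact mul_nonneg (M.m_nonneg (hGnn u hupos)) hW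
    have hub : ∀ᶠ u in 𝓝 u₀, M.m (G u) * W ≤ G u * W := by
      filter_upwards [eventually_gt_nhds hu₀] with u hupos
      exact mul_le_mul_of_nonneg_right (M.m_le_self (hGnn u hupos)) hW
    have hGW : Tendsto (fun u => G u * W) (𝓝 u₀) (𝓝 0) := by
      have h := hGtend.mul_const W
      rwa [zero_mul] at h
    have htend0 : Tendsto (fun u => M.m (G u) * W) (𝓝 u₀) (𝓝 0) :=
      squeeze_zero' h0 hub hGW
    have hval : M.m (G u₀) * W = 0 := by
      have : ¬ (M.β * W > u₀) := by rw [← heq]; exact lt_irrefl _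
      rw [hG]; simp [if_neg this, M.m_zero]
    show Tendsto _ (𝓝 u₀) (𝓝 (M.m (G u₀) * W))
    rw [hval]
    exact htend0
  · -- u₀ > β W : locally zero
    have hc : ContinuousAt (fun _ : ℝ => M.m 0 * W) u₀ := continuousAt_const
    refine hc.congr ?_
    filter_upwards [isOpen_Ioi.mem_nhds (show u₀ ∈ Ioi (M.β * W) from hgt)] with u hu
    rw [if_neg (not_lt.mpr (le_of_lt hu))]

include hg0 hgmono in
lemma meas_integrand (lam : Θ → ℝ) (hlam_meas : Measurable lam)
    (hlam : ∀ θ, lam θ ∈ Icc (0:ℝ) 1) {u : ℝ} (hu : 0 < u) :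
    Measurable (fun ν : PM =>
      M.m (if M.β * wOf lam ν > u then g (wOf lam ν / u) else 0) * wOf lam ν) := by
  have hβ : 0 < M.β := M.β_mem.1
  have hm' : Monotone (fun t : ℝ => M.m (max t 0)) := fun a b hab =>
    M.mono.monotoneOn (le_max_right a 0) (le_max_right b 0) (max_le_max hab le_rfl)
  have hg' : Monotone (fun y : ℝ => g (max y (1 / M.β))) := fun a b hab =>
    hgmono.monotoneOn (le_max_right a (1 / M.β)) (le_max_right b (1 / M.β)) (max_le_max hab le_rfl)
  set F : ℝ → ℝ := fun x =>
    (if M.β * x > u then M.m (max (g (max (x / u) (1 / M.β))) 0) else M.m 0) * x with hF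
  have hinner : Measurable (fun x : ℝ => M.m (max (g (max (x / u) (1 / M.β))) 0)) := by
    have h1 : Measurable fun x : ℝ => x / u := measurable_id.div_const u
    have h2 : Measurable fun x : ℝ => g (max (x / u) (1 / M.β)) := hg'.measurable.comp h1
    exact hm'.measurable.comp h2
  have hFmeas : Measurable F := by
    rw [hF]
    apply Measurable.mul _ measurable_id
    exact Measurable.ite (measurableSet_lt measurable_const
      (measurable_const.mul measurable_id)) hinner measurable_const
  have hcomp : (fun ν : PM =>
      M.m (if M.β * wOf lam ν > u then g (wOf lam ν / u) else 0) * wOf lam ν)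
      = fun ν : PM => F (wOf lam ν) := by
    funext ν
    rw [hF]
    by_cases hc : M.β * wOf lam ν > u
    · have h1 : 1 / M.β < wOf lam ν / u := one_div_lt_div_aux M hβ hu hc
      simp only [if_pos hc, max_eq_left h1.le,
        max_eq_left (g_nonneg_aux M hg0 hgmono h1.le)]
    · simp only [if_neg hc]
  rw [hcomp]
  exact hFmeas.comp (measurable_wOf lam hlam_meas hlam)

end Aux

/-- Properties of `Φ(u) = k ∫ m(g(w(ν)/u) · 1[β w(ν) > u]) w(ν) dP(ν)`:
continuous and weakly decreasing on `(0,∞)`, zero above `β w̄`, limit `α k ∫ w dP` at `0+`;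
hence, if `∫ w dP > 0`, it has a unique fixed point, lying in `(0, β w̄)`. -/
theorem stmt7 (M : MeetingFunction) (g : ℝ → ℝ)
    (hg0 : g (1 / M.β) = 0)
    (hgmono : StrictMonoOn g (Ici (1 / M.β)))
    (hgcont : ContinuousOn g (Ici (1 / M.β)))
    (hgtop : Tendsto g atTop atTop)
    (hginv : ∀ t > (0:ℝ), g (t / M.m t) = t)
    (k : ℝ) (hk : 0 < k)
    (P : Measure PM) [IsProbabilityMeasure P]
    (lam : Θ → ℝ) (hlam_meas : Measurable lam) (hlam : ∀ θ, lam θ ∈ Icc (0:ℝ) 1)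
    (Φ : ℝ → ℝ)
    (hΦ : ∀ u : ℝ, Φ u =
      k * ∫ ν, M.m (if M.β * wOf lam ν > u then g (wOf lam ν / u) else 0) * wOf lam ν ∂P) :
    ContinuousOn Φ (Ioi 0) ∧
    AntitoneOn Φ (Ioi 0) ∧
    (∀ u : ℝ, M.β * essSup (wOf lam) P ≤ u → Φ u = 0) ∧
    Tendsto Φ (nhdsWithin 0 (Ioi 0)) (nhds (M.α * k * ∫ ν, wOf lam ν ∂P)) ∧
    (0 < ∫ ν, wOf lam ν ∂P →
      (∃! u : ℝ, 0 < u ∧ Φ u = u) ∧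
      (∀ u : ℝ, 0 < u → Φ u = u → u ∈ Ioo 0 (M.β * essSup (wOf lam) P))) := by
  have hβ : 0 < M.β := M.β_mem.1
  have hw_nonneg : ∀ ν : PM, 0 ≤ wOf lam ν := wOf_nonneg lam hlam
  have hw_le_one : ∀ ν : PM, wOf lam ν ≤ 1 := wOf_le_one lam hlam_meas hlam
  -- bounds on the integrand
  have harg : ∀ u : ℝ, 0 < u → ∀ ν : PM,
      0 ≤ (if M.β * wOf lam ν > u then g (wOf lam ν / u) else 0) := by
    intro u hu ν
    by_cases hc : M.β * wOf lam ν > u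
    · rw [if_pos hc]
      exact g_nonneg_aux M hg0 hgmono (one_div_lt_div_aux M hβ hu hc).le
    · rw [if_neg hc]
  have hf_nonneg : ∀ u : ℝ, 0 < u → ∀ ν : PM,
      0 ≤ M.m (if M.β * wOf lam ν > u then g (wOf lam ν / u) else 0) * wOf lam ν :=
    fun u hu ν => mul_nonneg (M.m_nonneg (harg u hu ν)) (hw_nonneg ν)
  have hf_le_one : ∀ u : ℝ, 0 < u → ∀ ν : PM,
      M.m (if M.β * wOf lam ν > u then g (wOf lam ν / u) else 0) * wOf lam ν ≤ 1 := by
    intro u hu ν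
    calc M.m (if M.β * wOf lam ν > u then g (wOf lam ν / u) else 0) * wOf lam ν
        ≤ 1 * 1 := mul_le_mul (M.m_le_one (harg u hu ν)) (hw_le_one ν) (hw_nonneg ν) zero_le_one
      _ = 1 := one_mul 1
  have hf_norm : ∀ u : ℝ, 0 < u → ∀ ν : PM,
      ‖M.m (if M.β * wOf lam ν > u then g (wOf lam ν / u) else 0) * wOf lam ν‖ ≤ 1 := by
    intro u hu ν
    rw [Real.norm_eq_abs, abs_of_nonneg (hf_nonneg u hu ν)]
    exact hf_le_one u hu ν
  have hint : ∀ u : ℝ, 0 < u → Integrable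
      (fun ν : PM => M.m (if M.β * wOf lam ν > u then g (wOf lam ν / u) else 0) * wOf lam ν) P :=
    fun u hu => (integrable_const (1:ℝ)).mono'
      (meas_integrand M hg0 hgmono lam hlam_meas hlam hu).aestronglyMeasurable
      (ae_of_all _ fun ν => hf_norm u hu ν)
  -- pointwise monotonicity in u
  have hmono_pt : ∀ ν : PM, ∀ u₁ u₂ : ℝ, 0 < u₁ → u₁ ≤ u₂ →
      M.m (if M.β * wOf lam ν > u₂ then g (wOf lam ν / u₂) else 0) * wOf lam ν ≤
      M.m (if M.β * wOf lam ν > u₁ then g (wOf lam ν / u₁) else 0) * wOf lam ν := by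
    intro ν u₁ u₂ hu₁ h12
    by_cases hc : M.β * wOf lam ν > u₂
    · have hc1 : M.β * wOf lam ν > u₁ := lt_of_le_of_lt h12 hc
      have h2 : 1 / M.β < wOf lam ν / u₂ :=
        one_div_lt_div_aux M hβ (hu₁.trans_le h12) hc
      have h1 : 1 / M.β < wOf lam ν / u₁ := one_div_lt_div_aux M hβ hu₁ hc1
      have hdivle : wOf lam ν / u₂ ≤ wOf lam ν / u₁ := by
        gcongr
        exact hw_nonneg ν
      have hgle : g (wOf lam ν / u₂) ≤ g (wOf lam ν / u₁) :=
        hgmono.monotoneOn h2.le h1.le hdivle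
      have hmle : M.m (g (wOf lam ν / u₂)) ≤ M.m (g (wOf lam ν / u₁)) :=
        M.mono.monotoneOn (g_nonneg_aux M hg0 hgmono h2.le)
          (g_nonneg_aux M hg0 hgmono h1.le) hgle
      rw [if_pos hc, if_pos hc1]
      exact mul_le_mul_of_nonneg_right hmle (hw_nonneg ν)
    · rw [if_neg hc, M.m_zero, zero_mul]
      exact hf_nonneg u₁ hu₁ ν
  -- continuity
  have hcontΦ : ContinuousOn Φ (Ioi 0) := by
    intro u₀ hu₀
    rw [mem_Ioi] at hu₀
    apply ContinuousAt.continuousWithinAt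
    have hI : ContinuousAt (fun u => ∫ ν, M.m
        (if M.β * wOf lam ν > u then g (wOf lam ν / u) else 0) * wOf lam ν ∂P) u₀ := by
      apply continuousAt_of_dominated (bound := fun _ => (1:ℝ))
      · exact eventually_of_mem (Ioi_mem_nhds hu₀) fun u hu =>
          (meas_integrand M hg0 hgmono lam hlam_meas hlam hu).aestronglyMeasurable
      · exact eventually_of_mem (Ioi_mem_nhds hu₀) fun u hu =>
          ae_of_all _ fun ν => hf_norm u hu ν
      · exact integrable_const 1
      · exact ae_of_all _ fun ν => contAux M hg0 hgmono hgcont (hw_nonneg ν) hu₀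
    have heqΦ : Φ = fun u => k * ∫ ν, M.m
        (if M.β * wOf lam ν > u then g (wOf lam ν / u) else 0) * wOf lam ν ∂P := funext hΦ
    rw [heqΦ]
    exact continuousAt_const.mul hI
  -- antitonicity
  have hanti : AntitoneOn Φ (Ioi 0) := by
    intro u₁ h1 u₂ h2 h12
    rw [mem_Ioi] at h1 h2
    rw [hΦ u₁, hΦ u₂]
    exact mul_le_mul_of_nonneg_left
      (integral_mono (hint u₂ h2) (hint u₁ h1) (fun ν => hmono_pt ν u₁ u₂ h1 h12)) hk.le
  -- vanishing above β * essSup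
  have hbdd : IsBoundedUnder (· ≤ ·) (ae P) (wOf lam) :=
    isBoundedUnder_of ⟨1, fun ν => hw_le_one ν⟩
  have hae_le : ∀ᵐ ν ∂P, wOf lam ν ≤ essSup (wOf lam) P := ae_le_essSup hbdd
  have hzero : ∀ u : ℝ, M.β * essSup (wOf lam) P ≤ u → Φ u = 0 := by
    intro u hu
    rw [hΦ u]
    have hcong : (fun ν : PM => M.m
        (if M.β * wOf lam ν > u then g (wOf lam ν / u) else 0) * wOf lam ν) =ᵐ[P]
        (fun _ : PM => (0:ℝ)) := by
      filter_upwards [hae_le] with ν hν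
      have hnc : ¬ (M.β * wOf lam ν > u) :=
        not_lt.mpr (le_trans (mul_le_mul_of_nonneg_left hν hβ.le) hu)
      rw [if_neg hnc, M.m_zero, zero_mul]
    rw [integral_congr_ae hcong, integral_zero, mul_zero]
  -- limit at 0+
  have hlim_pt : ∀ ν : PM, Tendsto (fun u => M.m
      (if M.β * wOf lam ν > u then g (wOf lam ν / u) else 0) * wOf lam ν)
      (𝓝[>] (0:ℝ)) (𝓝 (M.α * wOf lam ν)) := by
    intro ν
    rcases (hw_nonneg ν).eq_or_lt with hW0 | hWpos
    · simp only [← hW0, mul_zero]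
      exact tendsto_const_nhds
    · have h1 : Tendsto (fun u : ℝ => wOf lam ν * u⁻¹) (𝓝[>] 0) atTop :=
        tendsto_inv_nhdsGT_zero.const_mul_atTop hWpos
      have h1' : Tendsto (fun u : ℝ => wOf lam ν / u) (𝓝[>] 0) atTop := by
        simpa [div_eq_mul_inv] using h1
      have h2 : Tendsto (fun u : ℝ => g (wOf lam ν / u)) (𝓝[>] 0) atTop :=
        hgtop.comp h1'
      have h3 : Tendsto (fun u : ℝ => M.m (g (wOf lam ν / u))) (𝓝[>] 0) (𝓝 M.α) :=
        M.α_lim.comp h2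
      have h4 : Tendsto (fun u : ℝ => M.m (g (wOf lam ν / u)) * wOf lam ν) (𝓝[>] 0)
          (𝓝 (M.α * wOf lam ν)) := h3.mul_const _
      refine Tendsto.congr' ?_ h4
      filter_upwards [Ioo_mem_nhdsGT (mul_pos hβ hWpos)] with u hu
      rw [if_pos hu.2]
  have hlimΦ : Tendsto Φ (𝓝[>] (0:ℝ)) (𝓝 (M.α * k * ∫ ν, wOf lam ν ∂P)) := by
    have hlim := tendsto_integral_filter_of_dominated_convergence (μ := P)
      (bound := fun _ => (1:ℝ))
      (eventually_of_mem self_mem_nhdsWithin fun u (hu : u ∈ Ioi (0:ℝ)) =>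
        (meas_integrand M hg0 hgmono lam hlam_meas hlam hu).aestronglyMeasurable)
      (eventually_of_mem self_mem_nhdsWithin fun u (hu : u ∈ Ioi (0:ℝ)) =>
        ae_of_all _ fun ν => hf_norm u hu ν)
      (integrable_const 1) (ae_of_all _ hlim_pt)
    have h2 := hlim.const_mul k
    have h3 : k * ∫ ν, M.α * wOf lam ν ∂P = M.α * k * ∫ ν, wOf lam ν ∂P := by
      rw [integral_const_mul]; ring
    rw [h3] at h2
    have heqΦ : Φ = fun u => k * ∫ ν, M.m
        (if M.β * wOf lam ν > u then g (wOf lam ν / u) else 0) * wOf lam ν ∂P := funext hΦ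
    rw [heqΦ]
    exact h2
  refine ⟨hcontΦ, hanti, hzero, hlimΦ, ?_⟩
  -- fixed point part
  intro hpos
  have hesspos : 0 < essSup (wOf lam) P := by
    by_contra h
    push_neg at h
    have hae0 : wOf lam =ᵐ[P] (fun _ => (0:ℝ)) := by
      filter_upwards [hae_le] with ν hν
      exact le_antisymm (hν.trans h) (hw_nonneg ν)
    rw [integral_congr_ae hae0, integral_zero] at hpos
    exact lt_irrefl 0 hpos
  set b := M.β * essSup (wOf lam) P with hb
  have hbpos : 0 < b := mul_pos hβ hesspos
  have hΦb : Φ b = 0 := hzero b le_rfl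
  have hloc : ∀ u : ℝ, 0 < u → Φ u = u → u ∈ Ioo 0 b := by
    intro u hu hfix
    refine ⟨hu, ?_⟩
    by_contra h
    push_neg at h
    rw [hzero u h] at hfix
    exact hu.ne hfix
  have hL : 0 < M.α * k * ∫ ν, wOf lam ν ∂P :=
    mul_pos (mul_pos M.α_mem.1 hk) hpos
  set L := M.α * k * ∫ ν, wOf lam ν ∂P with hLdef
  have hev1 : ∀ᶠ u in 𝓝[>] (0:ℝ), L / 2 < Φ u :=
    hlimΦ.eventually (eventually_gt_nhds (half_lt_self hL))
  have hev2 : ∀ᶠ u in 𝓝[>] (0:ℝ), u ∈ Ioo 0 (min (L / 2) b) :=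
    eventually_of_mem (Ioo_mem_nhdsGT (lt_min (half_pos hL) hbpos)) fun u hu => hu
  obtain ⟨c, hc1, hc2⟩ := (hev1.and hev2).exists
  have hc0 : 0 < c := hc2.1
  have hcb : c < b := lt_of_lt_of_le hc2.2 (min_le_right _ _)
  have hcΦ : c < Φ c := lt_trans (lt_of_lt_of_le hc2.2 (min_le_left _ _)) hc1
  -- IVT
  have hsub : Icc c b ⊆ Ioi 0 := fun x hx => lt_of_lt_of_le hc0 hx.1
  have hcont' : ContinuousOn (fun u => Φ u - u) (Icc c b) :=
    (hcontΦ.mono hsub).sub continuousOn_id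
  have h0mem : (0:ℝ) ∈ Icc ((fun u => Φ u - u) b) ((fun u => Φ u - u) c) := by
    constructor
    · simp only [hΦb]
      linarith
    · simp only []
      linarith
  obtain ⟨u, huIcc, hu0⟩ := intermediate_value_Icc' hcb.le hcont' h0mem
  have hufix : Φ u = u := by
    have := sub_eq_zero.mp hu0
    linarith [hu0]
  have hupos : 0 < u := lt_of_lt_of_le hc0 huIcc.1
  refine ⟨⟨u, ⟨hupos, hufix⟩, ?_⟩, hloc⟩
  rintro v ⟨hv, hvfix⟩
  rcases le_total v u with h | h
  · have hΦle : Φ u ≤ Φ v := hanti (mem_Ioi.mpr hv) (mem_Ioi.mpr hupos) h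
    rw [hufix, hvfix] at hΦle
    exact le_antisymm h hΦle
  · have hΦle : Φ v ≤ Φ u := hanti (mem_Ioi.mpr hupos) (mem_Ioi.mpr hv) h
    rw [hufix, hvfix] at hΦle
    exact le_antisymm hΦle h
end
end

section
/- Assume λ(θ) = ℓ for all θ with ℓ ∈ (0,1]. If the map t ↦ t/m(t) is concave on (0,∞), then F itself (the distribution induced by the perfect segmentation) is a constrained-efficient segmentation: F maximizes k ∫ m(τ*_H(x)) x dH(x) over H ∈ MPC(F). -/
open MeasureTheory Set Filter Topology ProbabilityTheory

noncomputable section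

/-- `MPC μF`: the probability measures on `[0,1]` dominated by `μF` in the convex order,
i.e. the mean-preserving contractions of (the CDF of) `μF`. -/
def MPC (μF : Measure ℝ) : Set (Measure ℝ) :=
  {H | IsProbabilityMeasure H ∧ H (Icc (0:ℝ) 1)ᶜ = 0 ∧
    ∀ c : ℝ → ℝ, ConvexOn ℝ (Icc 0 1) c → ContinuousOn c (Icc 0 1) →
      ∫ x, c x ∂H ≤ ∫ x, c x ∂μF}

/-- Equilibrium tightness in the submarket with posterior mean `x` at reservation value `u`:
`g(ℓx/u) · 1[βℓx > u]`. -/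
def tstar (M : MeetingFunction) (g : ℝ → ℝ) (l u x : ℝ) : ℝ :=
  if M.β * l * x > u then g (l * x / u) else 0

namespace Stmt10Aux

variable (M : MeetingFunction)

lemma m_pos {t : ℝ} (ht : 0 < t) : 0 < M.m t := by
  have := M.mono (self_mem_Ici) (mem_Ici.2 ht.le) ht
  rwa [M.m_zero] at this

lemma m_nonneg {t : ℝ} (ht : 0 ≤ t) : 0 ≤ M.m t := by
  rcases ht.eq_or_lt with h | h
  · simp [← h, M.m_zero]
  · exact (m_pos M h).le

lemma m_le_beta {t : ℝ} (ht : 0 < t) : M.m t ≤ M.β * t := by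
  have hβ := M.β_mem.1
  have hslope : M.m t / t ≤ M.β := by
    refine ge_of_tendsto M.β_lim ?_
    filter_upwards [Ioo_mem_nhdsGT_of_mem (by constructor <;> simp [ht] : (0:ℝ) ∈ Ico 0 t)]
      with s hs
    obtain ⟨hs0, hst⟩ := hs
    have hst1 : s / t < 1 := (div_lt_one ht).2 hst
    have h1 : s / t * M.m t ≤ M.m s := by
      have heq : (1 - s/t) * 0 + s/t * t = s := by field_simp; ring
      calc s/t * M.m t = (1 - s/t) * M.m 0 + s/t * M.m t := by simp [M.m_zero]
        _ ≤ M.m ((1 - s/t) * 0 + s/t * t) := by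
            simpa only [smul_eq_mul] using M.concave.concaveOn.2 (self_mem_Ici)
              (mem_Ici.2 ht.le) (by linarith) (by positivity) (by ring)
        _ = M.m s := by rw [heq]
    rw [div_le_div_iff₀ ht hs0]
    have h2 : s / t * M.m t * t = M.m t * s := by field_simp
    have h3 := mul_le_mul_of_nonneg_right h1 ht.le
    rw [h2] at h3
    linarith
  calc M.m t = M.m t / t * t := by field_simp
    _ ≤ M.β * t := mul_le_mul_of_nonneg_right hslope ht.le

lemma inv_beta_le {t : ℝ} (ht : 0 < t) : 1 / M.β ≤ t / M.m t := by
  rw [div_le_div_iff₀ M.β_mem.1 (m_pos M ht), one_mul]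
  have := m_le_beta M ht
  linarith [this]

variable {g : ℝ → ℝ}
variable (hg0 : g (1 / M.β) = 0) (hgmono : StrictMonoOn g (Ici (1 / M.β)))
variable (hginv : ∀ t > (0:ℝ), g (t / M.m t) = t)

section
include hg0 hgmono

lemma g_nonneg {y : ℝ} (hy : 1 / M.β ≤ y) : 0 ≤ g y := by
  have := hgmono.monotoneOn (self_mem_Ici) (mem_Ici.2 hy) hy
  rwa [hg0] at this

lemma g_pos {y : ℝ} (hy : 1 / M.β < y) : 0 < g y := by
  have := hgmono (self_mem_Ici) (mem_Ici.2 hy.le) hy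
  rwa [hg0] at this

lemma eq_of_g_eq_zero {y : ℝ} (hy : 1 / M.β ≤ y) (h : g y = 0) : y = 1 / M.β := by
  by_contra hne
  have : 1 / M.β < y := lt_of_le_of_ne hy (Ne.symm hne)
  exact (g_pos M hg0 hgmono this).ne' h

include hginv

lemma h_of_g {y : ℝ} (hy : 1 / M.β < y) : g y / M.m (g y) = y := by
  have htpos : 0 < g y := g_pos M hg0 hgmono hy
  exact hgmono.injOn (mem_Ici.2 (inv_beta_le M htpos)) (mem_Ici.2 hy.le)
    (by rw [hginv _ htpos])

end

lemma h_cont {c : ℝ} (hc : 0 < c) : ContinuousAt (fun t => t / M.m t) c :=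
  (continuousAt_id).div (M.diff1 c hc).continuousAt (m_pos M hc).ne'

lemma h_lim : Tendsto (fun t => t / M.m t) (nhdsWithin 0 (Ioi 0)) (nhds (1 / M.β)) := by
  have h1 : Tendsto (fun t => (M.m t / t)⁻¹) (nhdsWithin 0 (Ioi 0)) (nhds (M.β)⁻¹) :=
    M.β_lim.inv₀ M.β_mem.1.ne'
  rw [one_div]
  refine h1.congr' ?_
  filter_upwards [self_mem_nhdsWithin] with t _
  rw [inv_div]

section
variable (hconc : ConcaveOn ℝ (Ioi 0) (fun t => t / M.m t))
include hg0 hgmono hginv hconc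

lemma g_convex_aux {z1 z2 a b : ℝ} (hz1 : 1 / M.β ≤ z1) (hz2 : 1 / M.β ≤ z2)
    (ha : 0 < a) (hb : 0 < b) (hab : a + b = 1) (ht2 : 0 < g z2) :
    g (a * z1 + b * z2) ≤ a * g z1 + b * g z2 := by
  set t1 := g z1 with ht1def
  set t2 := g z2 with ht2def
  have ht1 : 0 ≤ t1 := g_nonneg M hg0 hgmono hz1
  have hz2' : 1 / M.β < z2 := by
    rcases hz2.eq_or_lt with h | h
    · exact absurd (by rw [ht2def, ← h, hg0]) ht2.ne'
    · exact h
  have hht2 : t2 / M.m t2 = z2 := h_of_g M hg0 hgmono hginv hz2'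
  have hc : 0 < a * t1 + b * t2 := by positivity
  -- limit of h (t1 + ε) as ε → 0+ is z1
  have hT1 : Tendsto (fun ε => (t1 + ε) / M.m (t1 + ε)) (nhdsWithin 0 (Ioi 0)) (nhds z1) := by
    rcases ht1.eq_or_lt with h0 | h0
    · have hz1' : z1 = 1 / M.β := eq_of_g_eq_zero M hg0 hgmono hz1 (by rw [← ht1def, ← h0])
      rw [hz1']
      simpa [← h0] using h_lim M
    · have hz1' : 1 / M.β < z1 := by
        rcases hz1.eq_or_lt with h | h
        · exact absurd (by rw [ht1def, ← h, hg0]) h0.ne'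
        · exact h
      have hht1 : t1 / M.m t1 = z1 := h_of_g M hg0 hgmono hginv hz1'
      rw [← hht1]
      have hinner : Tendsto (fun ε : ℝ => t1 + ε) (nhdsWithin 0 (Ioi 0)) (nhds t1) := by
        have : Tendsto (fun ε : ℝ => t1 + ε) (nhds 0) (nhds (t1 + 0)) :=
          (continuous_const.add continuous_id).tendsto 0
        simpa using this.mono_left nhdsWithin_le_nhds
      exact (h_cont M h0).tendsto.comp hinner
  have hTc : Tendsto (fun ε => (a * (t1 + ε) + b * t2) / M.m (a * (t1 + ε) + b * t2))
      (nhdsWithin 0 (Ioi 0)) (nhds ((a * t1 + b * t2) / M.m (a * t1 + b * t2))) := by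
    have hinner : Tendsto (fun ε : ℝ => a * (t1 + ε) + b * t2) (nhdsWithin 0 (Ioi 0))
        (nhds (a * t1 + b * t2)) := by
      have : Tendsto (fun ε : ℝ => a * (t1 + ε) + b * t2) (nhds 0)
          (nhds (a * (t1 + 0) + b * t2)) := by
        exact (Continuous.tendsto (by continuity) 0)
      simpa using this.mono_left nhdsWithin_le_nhds
    exact (h_cont M hc).tendsto.comp hinner
  have hLHS : Tendsto (fun ε => a * ((t1 + ε) / M.m (t1 + ε)) + b * (t2 / M.m t2))
      (nhdsWithin 0 (Ioi 0)) (nhds (a * z1 + b * z2)) := by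
    rw [hht2]
    exact (hT1.const_mul a).add tendsto_const_nhds
  have hev : ∀ᶠ ε in nhdsWithin 0 (Ioi 0),
      a * ((t1 + ε) / M.m (t1 + ε)) + b * (t2 / M.m t2) ≤
        (a * (t1 + ε) + b * t2) / M.m (a * (t1 + ε) + b * t2) := by
    filter_upwards [self_mem_nhdsWithin] with ε hε
    have hε' : (0:ℝ) < ε := hε
    have := hconc.2 (mem_Ioi.2 (by linarith : (0:ℝ) < t1 + ε))
      (mem_Ioi.2 (by linarith [ht2, hht2, g_pos M hg0 hgmono hz2'] : (0:ℝ) < t2))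
      ha.le hb.le hab
    simpa only [smul_eq_mul] using this
  have key : a * z1 + b * z2 ≤ (a * t1 + b * t2) / M.m (a * t1 + b * t2) :=
    le_of_tendsto_of_tendsto hLHS hTc hev
  have hmem1 : 1 / M.β ≤ a * z1 + b * z2 := by
    calc 1 / M.β = a * (1 / M.β) + b * (1 / M.β) := by rw [← add_mul, hab, one_mul]
      _ ≤ a * z1 + b * z2 := by
          exact add_le_add (mul_le_mul_of_nonneg_left hz1 ha.le)
            (mul_le_mul_of_nonneg_left hz2 hb.le)
  have hmem2 : 1 / M.β ≤ (a * t1 + b * t2) / M.m (a * t1 + b * t2) := inv_beta_le M hc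
  have := hgmono.monotoneOn (mem_Ici.2 hmem1) (mem_Ici.2 hmem2) key
  rwa [hginv _ hc] at this

lemma g_convex {z1 z2 a b : ℝ} (hz1 : 1 / M.β ≤ z1) (hz2 : 1 / M.β ≤ z2)
    (ha : 0 ≤ a) (hb : 0 ≤ b) (hab : a + b = 1) :
    g (a * z1 + b * z2) ≤ a * g z1 + b * g z2 := by
  rcases ha.eq_or_lt with ha0 | ha0
  · have : b = 1 := by linarith
    simp [← ha0, this]
  rcases hb.eq_or_lt with hb0 | hb0
  · have : a = 1 := by linarith
    simp [← hb0, this]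
  by_cases h2 : 0 < g z2
  · exact g_convex_aux M hg0 hgmono hginv hconc hz1 hz2 ha0 hb0 hab h2
  by_cases h1 : 0 < g z1
  · have := g_convex_aux M hg0 hgmono hginv hconc hz2 hz1 hb0 ha0 (by linarith) h1
    calc g (a * z1 + b * z2) = g (b * z2 + a * z1) := by ring_nf
      _ ≤ b * g z2 + a * g z1 := this
      _ = a * g z1 + b * g z2 := by ring
  · push_neg at h1 h2
    have e1 : g z1 = 0 := le_antisymm h1 (g_nonneg M hg0 hgmono hz1)
    have e2 : g z2 = 0 := le_antisymm h2 (g_nonneg M hg0 hgmono hz2)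
    have hz1' := eq_of_g_eq_zero M hg0 hgmono hz1 e1
    have hz2' := eq_of_g_eq_zero M hg0 hgmono hz2 e2
    rw [hz1', hz2']
    have heq : a * (1 / M.β) + b * (1 / M.β) = 1 / M.β := by rw [← add_mul, hab, one_mul]
    rw [heq, hg0]
    simp

end

section
variable {l u u' x : ℝ}
include hg0 hgmono hginv

lemma eq_psi (hu : 0 < u) (x : ℝ) :
    M.m (tstar M g l u x) * (l * x) = u * g (max (l * x / u) (1 / M.β)) := by
  have hβ := M.β_mem.1
  rw [tstar]
  split_ifs with h
  · have hx : 1 / M.β < l * x / u := by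
      rw [div_lt_div_iff₀ hβ hu, one_mul]
      nlinarith [h]
    rw [max_eq_left hx.le]
    set t := g (l * x / u) with htdef
    have htpos : 0 < t := g_pos M hg0 hgmono hx
    have hmt : 0 < M.m t := m_pos M htpos
    have hkey : t / M.m t = l * x / u :=
      hgmono.injOn (mem_Ici.2 (inv_beta_le M htpos)) (mem_Ici.2 hx.le) (hginv _ htpos)
    have := (div_eq_div_iff hmt.ne' hu.ne').1 hkey
    linarith [this]
  · push_neg at h
    have hx : l * x / u ≤ 1 / M.β := by
      rw [div_le_div_iff₀ hu hβ, one_mul]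
      nlinarith [h]
    rw [max_eq_right hx, M.m_zero, zero_mul, hg0, mul_zero]

lemma tstar_int_mono (hl : 0 < l) (hx : 0 ≤ x) (hu : 0 < u) (huu : u ≤ u') :
    M.m (tstar M g l u' x) * (l * x) ≤ M.m (tstar M g l u x) * (l * x) := by
  have hβ := M.β_mem.1
  have hu' : 0 < u' := lt_of_lt_of_le hu huu
  by_cases h' : M.β * l * x > u'
  · have h : M.β * l * x > u := lt_of_le_of_lt huu h'
    rw [tstar, tstar, if_pos h', if_pos h]
    have hlx : 0 < l * x := by nlinarith [h', hu', hβ, M.β_mem.2]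
    have k1 : 1 / M.β < l * x / u' := by
      rw [div_lt_div_iff₀ hβ hu', one_mul]; nlinarith [h']
    have k2 : l * x / u' ≤ l * x / u := div_le_div_of_nonneg_left hlx.le hu huu
    have hg1 : g (l * x / u') ≤ g (l * x / u) :=
      hgmono.monotoneOn (mem_Ici.2 k1.le) (mem_Ici.2 (k1.le.trans k2)) k2
    have hnn : 0 ≤ g (l * x / u') := g_nonneg M hg0 hgmono k1.le
    have := M.mono.monotoneOn (mem_Ici.2 hnn) (mem_Ici.2 (hnn.trans hg1)) hg1
    exact mul_le_mul_of_nonneg_right this hlx.le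
  · rw [tstar, tstar, if_neg h', M.m_zero, zero_mul]
    by_cases h : M.β * l * x > u
    · rw [if_pos h]
      have k1 : 1 / M.β < l * x / u := by
        rw [div_lt_div_iff₀ hβ hu, one_mul]; nlinarith [h]
      have hnn : 0 ≤ g (l * x / u) := g_nonneg M hg0 hgmono k1.le
      have hlx : 0 ≤ l * x := mul_nonneg hl.le hx
      exact mul_nonneg (m_nonneg M hnn) hlx
    · rw [if_neg h, M.m_zero, zero_mul]

end

end Stmt10Aux

/-- With `λ ≡ ℓ ∈ (0,1]`, if `t ↦ t/m(t)` is concave on `(0,∞)`, then `F`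
itself (the distribution induced by the perfect segmentation) is constrained-efficient. -/
theorem stmt10 (M : MeetingFunction) (g : ℝ → ℝ)
    (hg0 : g (1 / M.β) = 0)
    (hgmono : StrictMonoOn g (Ici (1 / M.β)))
    (hgcont : ContinuousOn g (Ici (1 / M.β)))
    (hgtop : Tendsto g atTop atTop)
    (hginv : ∀ t > (0:ℝ), g (t / M.m t) = t)
    (k : ℝ) (hk : 0 < k) (l : ℝ) (hl : l ∈ Ioc (0:ℝ) 1)
    (μF : Measure ℝ) [IsProbabilityMeasure μF]
    (hsupp : μF (Icc (0:ℝ) 1)ᶜ = 0) (hac : μF ≪ volume)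
    (ustar : Measure ℝ → ℝ)
    (hustar : ∀ H ∈ MPC μF, ustar H ∈ Ioo 0 (M.β * l) ∧
      ustar H = k * ∫ x, M.m (tstar M g l (ustar H) x) * (l * x) ∂H ∧
      ∀ u ∈ Ioo 0 (M.β * l),
        u = k * ∫ x, M.m (tstar M g l u x) * (l * x) ∂H → u = ustar H)
    (hconc : ConcaveOn ℝ (Ioi 0) (fun t => t / M.m t)) :
    μF ∈ MPC μF ∧
    ∀ H ∈ MPC μF,
      k * ∫ x, M.m (tstar M g l (ustar H) x) * x ∂H ≤
      k * ∫ x, M.m (tstar M g l (ustar μF) x) * x ∂μF := by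
  have hβ := M.β_mem.1
  have hlpos := hl.1
  have hFmem : μF ∈ MPC μF := ⟨inferInstance, hsupp, fun c _ _ => le_rfl⟩
  refine ⟨hFmem, ?_⟩
  intro H hH
  obtain ⟨huH, heqH, -⟩ := hustar H hH
  obtain ⟨huF, heqF, -⟩ := hustar μF hFmem
  set uH := ustar H with huHdef
  set uF := ustar μF with huFdef
  set G : ℝ → ℝ := fun y => g (max y (1 / M.β)) with hGdef
  have hGcont : Continuous G := hgcont.comp_continuous (continuous_id.max continuous_const)
    (fun y => mem_Ici.2 (le_max_right _ _))
  have hGmono : Monotone G := fun y y' hyy =>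
    hgmono.monotoneOn (mem_Ici.2 (le_max_right _ _)) (mem_Ici.2 (le_max_right _ _))
      (max_le_max hyy le_rfl)
  have hGnn : ∀ y, 0 ≤ G y := fun y => Stmt10Aux.g_nonneg M hg0 hgmono (le_max_right _ _)
  have hGconv : ∀ y1 y2 a b : ℝ, 0 ≤ a → 0 ≤ b → a + b = 1 →
      G (a * y1 + b * y2) ≤ a * G y1 + b * G y2 := by
    intro y1 y2 a b ha hb hab
    have hmemc : 1 / M.β ≤ a * max y1 (1 / M.β) + b * max y2 (1 / M.β) := by
      calc (1:ℝ) / M.β = a * (1 / M.β) + b * (1 / M.β) := by rw [← add_mul, hab, one_mul]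
        _ ≤ _ := add_le_add (mul_le_mul_of_nonneg_left (le_max_right _ _) ha)
            (mul_le_mul_of_nonneg_left (le_max_right _ _) hb)
    have step1 : max (a * y1 + b * y2) (1 / M.β) ≤
        a * max y1 (1 / M.β) + b * max y2 (1 / M.β) :=
      max_le (add_le_add (mul_le_mul_of_nonneg_left (le_max_left _ _) ha)
        (mul_le_mul_of_nonneg_left (le_max_left _ _) hb)) hmemc
    calc G (a * y1 + b * y2)
        ≤ g (a * max y1 (1 / M.β) + b * max y2 (1 / M.β)) :=
          hgmono.monotoneOn (mem_Ici.2 (le_max_right _ _)) (mem_Ici.2 hmemc) step1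
      _ ≤ a * G y1 + b * G y2 :=
          Stmt10Aux.g_convex M hg0 hgmono hginv hconc (le_max_right _ _) (le_max_right _ _)
            ha hb hab
  have epsi : ∀ u, 0 < u → ∀ x, M.m (tstar M g l u x) * (l * x) = u * G (l * x / u) :=
    fun u hu x => Stmt10Aux.eq_psi M hg0 hgmono hginv hu x
  have ae_mem : ∀ᵐ x ∂μF, x ∈ Icc (0:ℝ) 1 := by
    rw [ae_iff]
    exact hsupp
  have key : uH ≤ uF := by
    rcases le_total uH uF with h | h
    · exact h
    · have hψcont : Continuous (fun x => uH * G (l * x / uH)) :=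
        continuous_const.mul (hGcont.comp ((continuous_const.mul continuous_id).div_const _))
      have hψconv : ConvexOn ℝ (Icc (0:ℝ) 1) (fun x => uH * G (l * x / uH)) := by
        refine ⟨convex_Icc _ _, ?_⟩
        intro x1 _ x2 _ a b ha hb hab
        simp only [smul_eq_mul]
        have harg : l * (a * x1 + b * x2) / uH = a * (l * x1 / uH) + b * (l * x2 / uH) := by
          ring
        rw [harg]
        calc uH * G (a * (l * x1 / uH) + b * (l * x2 / uH))
            ≤ uH * (a * G (l * x1 / uH) + b * G (l * x2 / uH)) :=
              mul_le_mul_of_nonneg_left (hGconv _ _ a b ha hb hab) huH.1.le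
          _ = a * (uH * G (l * x1 / uH)) + b * (uH * G (l * x2 / uH)) := by ring
      have hψintF : Integrable (fun x => uF * G (l * x / uF)) μF := by
        refine (integrable_const (uF * G (l * 1 / uF))).mono'
          (continuous_const.mul (hGcont.comp ((continuous_const.mul continuous_id).div_const _))).aestronglyMeasurable ?_
        filter_upwards [ae_mem] with x hx
        rw [Real.norm_eq_abs, abs_of_nonneg (mul_nonneg huF.1.le (hGnn _))]
        refine mul_le_mul_of_nonneg_left (hGmono ?_) huF.1.le
        gcongr
        · exact huF.1.le
        · exact hx.2
      have c1 : ∫ x, uH * G (l * x / uH) ∂H ≤ ∫ x, uH * G (l * x / uH) ∂μF :=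
        hH.2.2 _ hψconv hψcont.continuousOn
      have c2 : ∫ x, uH * G (l * x / uH) ∂μF ≤ ∫ x, uF * G (l * x / uF) ∂μF := by
        refine integral_mono_of_nonneg
          (Eventually.of_forall fun x => mul_nonneg huH.1.le (hGnn _)) hψintF ?_
        filter_upwards [ae_mem] with x hx
        rw [← epsi uH huH.1 x, ← epsi uF huF.1 x]
        exact Stmt10Aux.tstar_int_mono M hg0 hgmono hginv hlpos hx.1 huF.1 h
      have e1 : uH = k * ∫ x, uH * G (l * x / uH) ∂H := by
        conv_lhs => rw [heqH]
        congr 1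
        exact integral_congr_ae (Eventually.of_forall fun x => epsi uH huH.1 x)
      have e2 : uF = k * ∫ x, uF * G (l * x / uF) ∂μF := by
        conv_lhs => rw [heqF]
        congr 1
        exact integral_congr_ae (Eventually.of_forall fun x => epsi uF huF.1 x)
      rw [e1, e2]
      exact mul_le_mul_of_nonneg_left (c1.trans c2) hk.le
  have hA : l * (k * ∫ x, M.m (tstar M g l uH x) * x ∂H) = uH := by
    conv_rhs => rw [heqH]
    rw [show (∫ x, M.m (tstar M g l uH x) * (l * x) ∂H)
        = ∫ x, l * (M.m (tstar M g l uH x) * x) ∂H from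
      integral_congr_ae (Eventually.of_forall fun x => by ring)]
    rw [integral_const_mul]
    ring
  have hB : l * (k * ∫ x, M.m (tstar M g l uF x) * x ∂μF) = uF := by
    conv_rhs => rw [heqF]
    rw [show (∫ x, M.m (tstar M g l uF x) * (l * x) ∂μF)
        = ∫ x, l * (M.m (tstar M g l uF x) * x) ∂μF from
      integral_congr_ae (Eventually.of_forall fun x => by ring)]
    rw [integral_const_mul]
    ring
  have final : l * (k * ∫ x, M.m (tstar M g l uH x) * x ∂H)
      ≤ l * (k * ∫ x, M.m (tstar M g l uF x) * x ∂μF) := by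
    rw [hA, hB]; exact key
  exact le_of_mul_le_mul_left final hlpos
end
end
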